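/- arXiv:1710.03623 — 11 statements merged into one kernel-verified Lean document; each statement's English description precedes it below -/
import Mathlib

section
/- Let S be a numerical semigroup with multiplicity m, conductor c, set of primitive elements P, L = S ∩ [0, c-1], q = ⌈c/m⌉, ρ = qm - c, S_q = [c, c+m-1] ∩ ℤ, P_q = P ∩ S_q, and D_q = S_q \ P. Then W(S) = W_0(S) + |P_q|·(|L| - q), where W(S) = |P||L| - c and W_0(S) = |P ∩ L||L| - q|D_q| + ρ. -/
open Set Pointwise

/-- `S` is a numerical semigroup: a cofinite submonoid of `ℕ` containing `0`. -/
def IsNumSgp (S : Set ℕ) : Prop :=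
  0 ∈ S ∧ (∀ a ∈ S, ∀ b ∈ S, a + b ∈ S) ∧ Sᶜ.Finite

/-- multiplicity `m = min (S \ {0})`. -/
noncomputable def NSmult (S : Set ℕ) : ℕ := sInf (S \ {0})

/-- NSconductor: least `c` with `c + ℕ ⊆ S`. -/
noncomputable def NSconductor (S : Set ℕ) : ℕ := sInf {n | ∀ k, n ≤ k → k ∈ S}

/-- primitive elements: nonzero elements not a sum of two nonzero elements of `S`. -/
noncomputable def NSprims (S : Set ℕ) : Set ℕ :=
  {a | a ∈ S ∧ a ≠ 0 ∧ ¬ ∃ x, x ∈ S ∧ x ≠ 0 ∧ ∃ y, y ∈ S ∧ y ≠ 0 ∧ a = x + y}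

/-- `L = S ∩ [0, c-1]`. -/
noncomputable def NSLset (S : Set ℕ) : Set ℕ := S ∩ Set.Iio (NSconductor S)

/-- `q = ⌈c / m⌉`. -/
noncomputable def NSqnum (S : Set ℕ) : ℕ := (NSconductor S + NSmult S - 1) / NSmult S

/-- `ρ = q * m - c`. -/
noncomputable def NSrho (S : Set ℕ) : ℕ := NSqnum S * NSmult S - NSconductor S

/-- `D_q = [c, c+m-1] \ P`, the non-primitive elements of `S` in `[c, c+m-1]`. -/
noncomputable def NSDq (S : Set ℕ) : Set ℕ :=
  Set.Icc (NSconductor S) (NSconductor S + NSmult S - 1) \ NSprims S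

/-- `W(S) = |P| |L| - c`. -/
noncomputable def NSWnum (S : Set ℕ) : ℤ :=
  (NSprims S).ncard * (NSLset S).ncard - NSconductor S

/-- `W₀(S) = |P ∩ L| |L| - q |D_q| + ρ`. -/
noncomputable def NSW0num (S : Set ℕ) : ℤ :=
  (NSprims S ∩ NSLset S).ncard * (NSLset S).ncard - NSqnum S * (NSDq S).ncard + NSrho S

/-- `⟨T⟩_t`: the submonoid generated by `T` together with all integers `≥ t`. -/
noncomputable def NSgenUpTo (T : Set ℕ) (t : ℕ) : Set ℕ :=
  (AddSubmonoid.closure T : Set ℕ) ∪ {n | t ≤ n}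

/-- Apéry set of `S` with respect to `m`: elements `s ∈ S` with `s - m ∉ S`. -/
noncomputable def NSapery (S : Set ℕ) : Set ℕ :=
  {s | s ∈ S ∧ ∀ t, s = t + NSmult S → t ∉ S}

/-- the interval `I_j = [jm - ρ, (j+1)m - ρ - 1]` (intersected with `ℕ`). -/
noncomputable def NSIint (S : Set ℕ) (j : ℕ) : Set ℕ :=
  Set.Icc (j * NSmult S - NSrho S) ((j + 1) * NSmult S - NSrho S - 1)

/-- `X_j = Ap(S,m) ∩ I_j`. -/
noncomputable def NSXj (S : Set ℕ) (j : ℕ) : Set ℕ := NSapery S ∩ NSIint S j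

/-- decomposable elements `D = (S \ {0}) + (S \ {0})`. -/
noncomputable def NSdecomp (S : Set ℕ) : Set ℕ :=
  {s | ∃ x, x ∈ S ∧ x ≠ 0 ∧ ∃ y, y ∈ S ∧ y ≠ 0 ∧ s = x + y}

/-- `h`-fold sumset `hA = A + ⋯ + A`. -/
def hfold {G : Type*} [AddCommMonoid G] : ℕ → Set G → Set G
  | 0, _ => {0}
  | n + 1, A => A + hfold n A

/-- `A` is a `B_h` set: `|hA| = C(|A| + h - 1, h)`. -/
def IsBh {G : Type*} [AddCommMonoid G] (h : ℕ) (A : Set G) : Prop :=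
  (hfold h A).ncard = (A.ncard + h - 1).choose h

theorem stmt0 (S : Set ℕ) (hS : IsNumSgp S) :
    NSWnum S = NSW0num S +
      ((NSprims S ∩ Set.Icc (NSconductor S) (NSconductor S + NSmult S - 1)).ncard : ℤ) *
        ((NSLset S).ncard - (NSqnum S : ℤ)) := by
  obtain ⟨h0, hadd, hcof⟩ := hS
  set c := NSconductor S with hc
  set m := NSmult S with hm
  -- the conductor set is nonempty
  have hne : {n | ∀ k, n ≤ k → k ∈ S}.Nonempty := by
    obtain ⟨n, hn⟩ := hcof.bddAbove
    exact ⟨n + 1, fun k hk => by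
      by_contra hkS
      exact absurd (hn hkS) (by omega)⟩
  have hcmem : ∀ k, c ≤ k → k ∈ S := Nat.sInf_mem hne
  -- m ∈ S, m ≠ 0
  have hSm : (S \ {0}).Nonempty := ⟨c + 1, hcmem _ (by omega), by simp⟩
  have hmmem : m ∈ S \ {0} := Nat.sInf_mem hSm
  have hmS : m ∈ S := hmmem.1
  have hm0 : m ≠ 0 := hmmem.2
  rcases Nat.eq_zero_or_pos c with hc0 | hcpos
  · -- c = 0 : S = ℕ
    have hSuniv : ∀ x : ℕ, x ∈ S := fun x => hcmem x (by omega)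
    have hm1 : m = 1 := by
      have h1 : m ≤ 1 := Nat.sInf_le ⟨hSuniv 1, by simp⟩
      omega
    have hP : NSprims S = {1} := by
      ext a
      simp only [NSprims, Set.mem_setOf_eq, Set.mem_singleton_iff]
      constructor
      · rintro ⟨-, ha0, hnd⟩
        by_contra h1
        exact hnd ⟨1, hSuniv 1, one_ne_zero, a - 1, hSuniv _, by omega, by omega⟩
      · rintro rfl
        exact ⟨hSuniv 1, one_ne_zero, by rintro ⟨x, -, hx, y, -, hy, hxy⟩; omega⟩
    have hL : NSLset S = ∅ := by
      ext x
      simp [NSLset, ← hc, hc0]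
    have hPq : NSprims S ∩ Set.Icc c (c + m - 1) = ∅ := by
      rw [hP]
      ext x
      simp only [Set.mem_inter_iff, Set.mem_singleton_iff, Set.mem_Icc,
        Set.mem_empty_iff_false, iff_false]
      omega
    have hDq : NSDq S = {0} := by
      rw [NSDq, ← hc, ← hm, hP]
      ext x
      simp only [Set.mem_diff, Set.mem_Icc, Set.mem_singleton_iff]
      omega
    have hq : NSqnum S = 0 := by
      rw [NSqnum, ← hc, ← hm, hc0, hm1]
    have hrho : NSrho S = 0 := by
      rw [NSrho, hq, ← hc, hc0]
      simp
    rw [NSWnum, NSW0num, hPq, hDq, hL, hP, hq, hrho, ← hc, hc0]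
    simp
  · -- main case c ≥ 1
    have hmc : m ≤ c := Nat.sInf_le ⟨hcmem c le_rfl, by simp; omega⟩
    -- primitives are < c + m
    have hPsub : NSprims S ⊆ Set.Iio (c + m) := by
      intro p hp
      simp only [Set.mem_Iio]
      by_contra hge
      exact hp.2.2 ⟨m, hmS, hm0, p - m, hcmem _ (by omega), by omega, by omega⟩
    -- finiteness
    have hPfin : (NSprims S).Finite := (Set.finite_Iio _).subset hPsub
    have hLfin : (NSLset S).Finite := (Set.finite_Iio c).inter_of_right _
    -- split P
    have hPeq : NSprims S =
        (NSprims S ∩ Set.Iio c) ∪ (NSprims S ∩ Set.Icc c (c + m - 1)) := by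
      ext x
      simp only [Set.mem_union, Set.mem_inter_iff, Set.mem_Iio, Set.mem_Icc]
      constructor
      · intro hx
        have hxlt : x < c + m := hPsub hx
        by_cases h : x < c
        · exact Or.inl ⟨hx, h⟩
        · exact Or.inr ⟨hx, by omega, by omega⟩
      · rintro (⟨h, -⟩ | ⟨h, -⟩) <;> exact h
    have hdisj : Disjoint (NSprims S ∩ Set.Iio c) (NSprims S ∩ Set.Icc c (c + m - 1)) := by
      rw [Set.disjoint_left]
      rintro x ⟨-, hx1⟩ ⟨-, hx2⟩
      simp only [Set.mem_Iio] at hx1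
      simp only [Set.mem_Icc] at hx2
      omega
    have hcardP : (NSprims S).ncard =
        (NSprims S ∩ Set.Iio c).ncard + (NSprims S ∩ Set.Icc c (c + m - 1)).ncard := by
      have h := Set.ncard_union_eq hdisj (hPfin.inter_of_left _) (hPfin.inter_of_left _)
      rw [← hPeq] at h
      exact h
    -- P ∩ L = P ∩ Iio c
    have hPL : NSprims S ∩ NSLset S = NSprims S ∩ Set.Iio c := by
      rw [NSLset, ← hc]
      ext x
      simp only [Set.mem_inter_iff, Set.mem_Iio]
      exact ⟨fun ⟨h1, h2, h3⟩ => ⟨h1, h3⟩, fun ⟨h1, h2⟩ => ⟨h1, h1.1, h2⟩⟩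
    -- |Icc c (c+m-1)| = m
    have hIcc : (Set.Icc c (c + m - 1)).ncard = m := by
      rw [← Finset.coe_Icc, Set.ncard_coe_finset, Nat.card_Icc]
      omega
    -- D_q
    have hDqeq : NSDq S = Set.Icc c (c + m - 1) \ (NSprims S ∩ Set.Icc c (c + m - 1)) := by
      rw [NSDq, ← hc, ← hm]
      ext x
      simp only [Set.mem_diff, Set.mem_inter_iff]
      tauto
    have hPqsub : NSprims S ∩ Set.Icc c (c + m - 1) ⊆ Set.Icc c (c + m - 1) :=
      Set.inter_subset_right
    have hcardDq : (NSDq S).ncard = m - (NSprims S ∩ Set.Icc c (c + m - 1)).ncard := by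
      rw [hDqeq, Set.ncard_diff hPqsub ((Set.finite_Icc _ _).subset hPqsub), hIcc]
    have hPqle : (NSprims S ∩ Set.Icc c (c + m - 1)).ncard ≤ m := by
      have h := Set.ncard_le_ncard hPqsub (Set.finite_Icc c (c + m - 1))
      omega
    -- q * m ≥ c
    have hqm : c ≤ NSqnum S * m := by
      rw [NSqnum, ← hc, ← hm]
      have hmpos : 0 < m := Nat.pos_of_ne_zero hm0
      have hq1 : (c + m - 1) / m = (c - 1) / m + 1 := by
        have heq : c + m - 1 = (c - 1) + m := by omega
        rw [heq, Nat.add_div_right _ hmpos]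
      by_contra h
      push_neg at h
      have h2 : (c + m - 1) / m ≤ (c - 1) / m :=
        (Nat.le_div_iff_mul_le hmpos).mpr (by omega)
      omega
    have hrho : (NSrho S : ℤ) = NSqnum S * m - c := by
      rw [NSrho, ← hc, ← hm]
      push_cast [Nat.cast_sub hqm]
      ring
    rw [NSWnum, NSW0num, ← hc, hPL, hcardP, hcardDq, hrho]
    push_cast [Nat.cast_sub hPqle]
    ring
end

section
/- Let S be a numerical semigroup with multiplicity m, conductor c, primitive set P, and L = S ∩ [0, c-1]. If W_0(S) ≥ 0, then W(S) ≥ 0, i.e., S satisfies Wilf's conjecture. (Here W(S) = |P||L| - c and W_0(S) = |P ∩ L||L| - q|D_q| + ρ with q = ⌈c/m⌉, ρ = qm - c, D_q = ([c, c+m-1] ∩ ℤ) \ P.) -/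
open Set Pointwise

private lemma stmt1_aux (j q m c r : ℕ) (hkey : m * q + r + 1 = c + m) (hmod : r < m)
    (h1 : (j + 1) * m ≤ q * m) : j * m < c := by
  have hexp : (j + 1) * m = j * m + m := by ring
  have h3 : q * m = m * q := mul_comm _ _
  linarith [hkey, hmod]

theorem stmt1 (S : Set ℕ) (hS : IsNumSgp S) (h0 : 0 ≤ NSW0num S) :
    0 ≤ NSWnum S := by
  obtain ⟨h0S, hadd, hcof⟩ := hS
  -- the multiplicity
  have hSdiff : (S \ {0}).Nonempty := by
    by_contra h
    rw [Set.not_nonempty_iff_eq_empty, Set.diff_eq_empty] at h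
    have hsub : Set.Ici 1 ⊆ Sᶜ := by
      intro n hn hnS
      have := h hnS
      simp only [Set.mem_singleton_iff] at this
      simp only [Set.mem_Ici] at hn
      omega
    exact Set.Ici_infinite 1 (hcof.subset hsub)
  set m := NSmult S with hm_def
  have hm_mem : m ∈ S \ {0} := Nat.sInf_mem hSdiff
  have hmS : m ∈ S := hm_mem.1
  have hm0 : 1 ≤ m := by
    have := hm_mem.2
    simp only [Set.mem_singleton_iff] at this
    omega
  -- the conductor
  set c := NSconductor S with hc_def
  have hCne : {n | ∀ k, n ≤ k → k ∈ S}.Nonempty := by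
    obtain ⟨b, hb⟩ := hcof.bddAbove
    refine ⟨b + 1, fun k hk => ?_⟩
    by_contra hkS
    have := hb hkS
    omega
  have hc : ∀ k, c ≤ k → k ∈ S := Nat.sInf_mem hCne
  -- if c = 0 then L = ∅ and W = 0
  rcases Nat.eq_zero_or_pos c with hc0 | hc1
  · have : NSLset S = ∅ := by
      rw [NSLset, ← hc_def, hc0]
      ext x; simp
    simp [NSWnum, this, ← hc_def, hc0]
  -- main case : c ≥ 1
  set q := NSqnum S with hq_def
  have hq_eq : q = (c + m - 1) / m := rfl
  have hdm : m * q + (c + m - 1) % m = c + m - 1 := by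
    rw [hq_eq]; exact Nat.div_add_mod _ _
  have hmod : (c + m - 1) % m < m := Nat.mod_lt _ (by omega)
  have hsub : c + m - 1 + 1 = c + m := by omega
  have hkey : m * q + (c + m - 1) % m + 1 = c + m := by rw [hdm]; exact hsub
  have hq1 : c ≤ q * m := by
    have h3 : q * m = m * q := mul_comm _ _
    linarith [hkey, hmod]
  have hq2 : ∀ j, j < q → j * m < c :=
    fun j hj => stmt1_aux j q m c _ hkey hmod (Nat.mul_le_mul_right m (by omega))
  -- multiples of m belong to S
  have hmul : ∀ j : ℕ, j * m ∈ S := by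
    intro j
    induction j with
    | zero => simpa using h0S
    | succ n ih =>
      have : (n + 1) * m = n * m + m := by ring
      rw [this]; exact hadd _ ih _ hmS
  -- L is finite and |L| ≥ q
  have hLfin : (NSLset S).Finite := (Set.finite_Iio c).subset Set.inter_subset_right
  have hLq : q ≤ (NSLset S).ncard := by
    have himg : (fun j => j * m) '' Set.Iio q ⊆ NSLset S := by
      rintro x ⟨j, hj, rfl⟩
      exact ⟨hmul j, hq2 j hj⟩
    have hinj : Set.InjOn (fun j => j * m) (Set.Iio q) := by
      intro a _ b _ hab
      exact Nat.eq_of_mul_eq_mul_right (by omega) hab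
    calc q = ((fun j => j * m) '' Set.Iio q).ncard := by
            rw [Set.ncard_image_of_injOn hinj, ← Finset.coe_Iio, Set.ncard_coe_finset,
              Nat.card_Iio]
      _ ≤ (NSLset S).ncard := Set.ncard_le_ncard himg hLfin
  -- primitives are < c + m
  have hPsub : NSprims S ⊆ Set.Iio (c + m) := by
    intro a ha
    by_contra hlt
    simp only [Set.mem_Iio, not_lt] at hlt
    refine ha.2.2 ⟨a - m, hc _ (by omega), by omega, m, hmS, by omega, by omega⟩
  have hPfin : (NSprims S).Finite := (Set.finite_Iio (c + m)).subset hPsub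
  -- the interval [c, c+m-1]
  set I := Set.Icc c (c + m - 1) with hI_def
  have hIfin : I.Finite := Set.finite_Icc _ _
  have hIcard : I.ncard = m := by
    rw [hI_def, ← Finset.coe_Icc, Set.ncard_coe_finset, Nat.card_Icc]
    omega
  have hDq_eq : NSDq S = I \ NSprims S := rfl
  set d := (NSDq S).ncard with hd_def
  have hd_le : d ≤ m := by
    rw [hd_def, hDq_eq, ← hIcard]
    exact Set.ncard_le_ncard Set.diff_subset hIfin
  -- P ∩ I = I \ D_q, so |P ∩ I| = m - d
  have hPI : NSprims S ∩ I = I \ NSDq S := by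
    rw [hDq_eq]
    ext x
    simp only [Set.mem_inter_iff, Set.mem_diff]
    tauto
  have hPIcard : (NSprims S ∩ I).ncard = m - d := by
    rw [hPI, Set.ncard_diff (by rw [hDq_eq]; exact Set.diff_subset) (hIfin.subset (by
      rw [hDq_eq]; exact Set.diff_subset)), hIcard, hd_def]
  -- decomposition of P
  have hPdec : NSprims S = (NSprims S ∩ NSLset S) ∪ (NSprims S ∩ I) := by
    ext a
    constructor
    · intro ha
      have haS : a ∈ S := ha.1
      have halt : a < c + m := hPsub ha
      rcases lt_or_ge a c with h | h
      · exact Or.inl ⟨ha, haS, h⟩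
      · exact Or.inr ⟨ha, h, by omega⟩
    · rintro (h | h) <;> exact h.1
  have hdisj : Disjoint (NSprims S ∩ NSLset S) (NSprims S ∩ I) := by
    rw [Set.disjoint_left]
    rintro a ⟨_, _, ha⟩ ⟨_, hb, _⟩
    simp only [Set.mem_Iio] at ha
    omega
  have hPcard : (NSprims S).ncard = (NSprims S ∩ NSLset S).ncard + (m - d) := by
    have h := Set.ncard_union_eq hdisj (hLfin.subset Set.inter_subset_right)
      (hIfin.subset Set.inter_subset_right)
    rw [← hPdec] at h
    rw [h, hPIcard]
  -- Finish with arithmetic over ℤ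
  have hrho : (NSrho S : ℤ) = (q : ℤ) * m - c := by
    have : NSrho S = q * m - c := rfl
    rw [this, Nat.cast_sub hq1]; push_cast; ring
  rw [NSW0num, ← hq_def, ← hd_def, hrho] at h0
  rw [NSWnum, hPcard, ← hc_def]
  set p1 := (NSprims S ∩ NSLset S).ncard
  set l := (NSLset S).ncard
  have h1 : ((m - d : ℕ) : ℤ) = (m : ℤ) - d := by
    rw [Nat.cast_sub hd_le]
  push_cast [h1]
  push_cast at h0
  have h2 : (q : ℤ) ≤ l := by exact_mod_cast hLq
  have h3 : (d : ℤ) ≤ m := by exact_mod_cast hd_le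
  nlinarith [mul_nonneg (sub_nonneg.2 h3) (sub_nonneg.2 h2)]
end

section
/- Let S be a numerical semigroup with multiplicity m, conductor c, q = ⌈c/m⌉, ρ = qm - c, and for j ≥ 0 let I_j = [jm - ρ, (j+1)m - ρ - 1] ∩ ℤ, X = Ap(S,m) = {s ∈ S : s - m ∉ S}, and X_j = X ∩ I_j. Then |L| = Σ_{i=0}^{q-1} (q - i)·|X_i|, where L = S ∩ [0, c-1]. -/
open Set Pointwise

/-!
Every `s ∈ S` is uniquely `x + k m` with `x` in the Apéry set and `k ≥ 0`. The shift by `ρ`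
aligns the blocks `I_j` with multiples of `m`, so that `x ∈ X_i` gives `⌊(s + ρ) / m⌋ = i + k`,
while `s < c` iff `s + ρ < q m` (as `q m = c + ρ`) iff `i + k < q`. Hence `L` is in bijection with
the pairs `(x, k)`, `x ∈ X_i`, `k < q - i`, `i < q`.
-/

lemma Nat.mem_Icc_mul_sub_iff_add_div_eq {m r x j : ℕ} (hr : r < m) :
    x ∈ Icc (j * m - r) ((j + 1) * m - r - 1) ↔ (x + r) / m = j := by
  rw [mem_Icc, Nat.div_eq_iff (by omega), add_one_mul]
  omega

def NSaperyPairs (S : Set ℕ) : Set (ℕ × ℕ) :=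
  ⋃ i ∈ Iio (NSqnum S), NSXj S i ×ˢ Iio (NSqnum S - i)

section

variable {S : Set ℕ}

lemma NSqnum_mul_NSmult (hm : 0 < NSmult S) :
    NSqnum S * NSmult S = NSconductor S + NSrho S := by
  have hdiv := Nat.div_add_mod (NSconductor S + NSmult S - 1) (NSmult S)
  have hmod := Nat.mod_lt (NSconductor S + NSmult S - 1) hm
  rw [NSrho, NSqnum, Nat.mul_comm]
  omega

lemma NSrho_lt_NSmult (hm : 0 < NSmult S) : NSrho S < NSmult S := by
  have hdiv := Nat.div_add_mod (NSconductor S + NSmult S - 1) (NSmult S)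
  have hmod := Nat.mod_lt (NSconductor S + NSmult S - 1) hm
  rw [NSrho, NSqnum, Nat.mul_comm]
  omega

lemma mem_NSIint_iff (hm : 0 < NSmult S) {x j : ℕ} :
    x ∈ NSIint S j ↔ (x + NSrho S) / NSmult S = j :=
  Nat.mem_Icc_mul_sub_iff_add_div_eq (NSrho_lt_NSmult hm)

lemma mem_NSLset_iff (hm : 0 < NSmult S) {s : ℕ} :
    s ∈ NSLset S ↔ s ∈ S ∧ (s + NSrho S) / NSmult S < NSqnum S := by
  rw [NSLset, mem_inter_iff, mem_Iio, Nat.div_lt_iff_lt_mul hm, NSqnum_mul_NSmult hm,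
    Nat.add_lt_add_iff_right]

lemma NSXj_finite (j : ℕ) : (NSXj S j).Finite :=
  (finite_Icc _ _).subset inter_subset_right

lemma mem_NSaperyPairs_iff (hm : 0 < NSmult S) {p : ℕ × ℕ} :
    p ∈ NSaperyPairs S ↔ p.1 ∈ NSapery S ∧ (p.1 + NSrho S) / NSmult S + p.2 < NSqnum S := by
  simp only [NSaperyPairs, mem_iUnion, mem_prod, NSXj, mem_inter_iff, mem_NSIint_iff hm,
    mem_Iio, exists_prop]
  constructor
  · rintro ⟨i, hi, ⟨hx, rfl⟩, hk⟩
    exact ⟨hx, by omega⟩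
  · rintro ⟨hx, hk⟩
    exact ⟨_, by omega, ⟨hx, rfl⟩, by omega⟩

lemma ncard_NSaperyPairs (hm : 0 < NSmult S) :
    (NSaperyPairs S).ncard = ∑ i ∈ Finset.range (NSqnum S), (NSqnum S - i) * (NSXj S i).ncard := by
  have hdisj : (Iio (NSqnum S)).PairwiseDisjoint fun i ↦ NSXj S i ×ˢ Iio (NSqnum S - i) := by
    refine fun i _ j _ hij ↦ disjoint_prod.2 (Or.inl ?_)
    refine disjoint_left.2 fun x hi hj ↦ hij ?_
    rw [← (mem_NSIint_iff hm).1 hi.2, ← (mem_NSIint_iff hm).1 hj.2]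
  rw [NSaperyPairs, (finite_Iio _).ncard_biUnion
    (fun i _ ↦ (NSXj_finite i).prod (finite_Iio _)) hdisj, ← Finset.coe_range,
    finsum_mem_coe_finset]
  simp only [ncard_prod, ncard_Iio_nat, mul_comm]

end

namespace IsNumSgp

variable {S : Set ℕ} (hS : IsNumSgp S)
include hS

lemma NSmult_mem_diff : NSmult S ∈ S \ {0} := by
  have hinf : S.Infinite := by simpa using hS.2.2.infinite_compl
  exact Nat.sInf_mem (hinf.sdiff (finite_singleton 0)).nonempty

lemma NSmult_pos : 0 < NSmult S :=
  Nat.pos_of_ne_zero hS.NSmult_mem_diff.2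

lemma add_mul_NSmult_mem {x : ℕ} (hx : x ∈ S) (k : ℕ) : x + k * NSmult S ∈ S := by
  induction k with
  | zero => simpa using hx
  | succ k ih =>
    rw [add_one_mul, ← add_assoc]
    exact hS.2.1 _ ih _ hS.NSmult_mem_diff.1

lemma exists_NSapery_add_mul {s : ℕ} (hs : s ∈ S) :
    ∃ x ∈ NSapery S, ∃ k, s = x + k * NSmult S := by
  induction s using Nat.strong_induction_on with
  | _ s ih =>
    by_cases hx : ∀ t, s = t + NSmult S → t ∉ S
    · exact ⟨s, ⟨hs, hx⟩, 0, by simp⟩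
    · push Not at hx
      obtain ⟨t, rfl, htS⟩ := hx
      obtain ⟨x, hxX, k, rfl⟩ := ih t (by simp [hS.NSmult_pos]) htS
      exact ⟨x, hxX, k + 1, by ring⟩

lemma NSapery_add_mul_le {x x' k k' : ℕ} (hx : x ∈ NSapery S) (hx' : x' ∈ NSapery S)
    (h : x + k * NSmult S = x' + k' * NSmult S) : k' ≤ k := by
  by_contra! hlt
  obtain ⟨d, rfl⟩ := Nat.exists_eq_add_of_lt hlt
  refine hx.2 (x' + d * NSmult S) ?_ (hS.add_mul_NSmult_mem hx'.1 d)
  apply Nat.add_right_cancel (m := k * NSmult S)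
  rw [h]
  ring

lemma NSapery_add_mul_inj {x x' k k' : ℕ} (hx : x ∈ NSapery S) (hx' : x' ∈ NSapery S)
    (h : x + k * NSmult S = x' + k' * NSmult S) : x = x' ∧ k = k' := by
  obtain rfl : k = k' :=
    le_antisymm (hS.NSapery_add_mul_le hx' hx h.symm) (hS.NSapery_add_mul_le hx hx' h)
  exact ⟨Nat.add_right_cancel h, rfl⟩

end IsNumSgp

namespace IsNumSgp

variable {S : Set ℕ} (hS : IsNumSgp S)
include hS

lemma NSLset_eq_image_NSaperyPairs :
    NSLset S = (fun p : ℕ × ℕ ↦ p.1 + p.2 * NSmult S) '' NSaperyPairs S := by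
  have hshift (x k : ℕ) : (x + k * NSmult S + NSrho S) / NSmult S
      = (x + NSrho S) / NSmult S + k := by
    rw [add_right_comm, Nat.add_mul_div_right _ _ hS.NSmult_pos]
  ext s
  simp only [mem_NSLset_iff hS.NSmult_pos, mem_image, mem_NSaperyPairs_iff hS.NSmult_pos,
    Prod.exists]
  constructor
  · rintro ⟨hs, hlt⟩
    obtain ⟨x, hx, k, rfl⟩ := hS.exists_NSapery_add_mul hs
    exact ⟨x, k, ⟨hx, hshift x k ▸ hlt⟩, rfl⟩
  · rintro ⟨x, k, ⟨hx, hlt⟩, rfl⟩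
    exact ⟨hS.add_mul_NSmult_mem hx.1 k, (hshift x k).symm ▸ hlt⟩

lemma injOn_NSaperyPairs :
    InjOn (fun p : ℕ × ℕ ↦ p.1 + p.2 * NSmult S) (NSaperyPairs S) := by
  intro p hp p' hp' h
  rw [mem_NSaperyPairs_iff hS.NSmult_pos] at hp hp'
  obtain ⟨h1, h2⟩ := hS.NSapery_add_mul_inj hp.1 hp'.1 h
  exact Prod.ext h1 h2

end IsNumSgp

theorem stmt5 (S : Set ℕ) (hS : IsNumSgp S) :
    (NSLset S).ncard = ∑ i ∈ Finset.range (NSqnum S), (NSqnum S - i) * (NSXj S i).ncard := by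
  rw [hS.NSLset_eq_image_NSaperyPairs, hS.injOn_NSaperyPairs.ncard_image,
    ncard_NSaperyPairs hS.NSmult_pos]
end

section
/- Let S be a numerical semigroup whose primitive set P satisfies P ⊆ [0, c-1] (equivalently P = P ∩ L, i.e., S is a leaf in the tree of numerical semigroups). Then W_0(S) = W(S). -/
open Set Pointwise

theorem stmt7 (S : Set ℕ) (hS : IsNumSgp S)
    (hleaf : NSprims S ⊆ Set.Iio (NSconductor S)) :
    NSW0num S = NSWnum S := by
  obtain ⟨h0, hadd, hcof⟩ := hS
  set c := NSconductor S with hc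
  set m := NSmult S with hm
  -- S \ {0} is nonempty
  have hSinf : S.Infinite := by
    have := hcof.infinite_compl
    rwa [compl_compl] at this
  have hSne : (S \ {0}).Nonempty := (hSinf.diff (Set.finite_singleton 0)).nonempty
  have hmS : m ∈ S \ {0} := Nat.sInf_mem hSne
  have hmin : ∀ x ∈ S \ {0}, m ≤ x := fun x hx => Nat.sInf_le hx
  have hmP : m ∈ NSprims S := by
    refine ⟨hmS.1, hmS.2, ?_⟩
    rintro ⟨x, hx, hx0, y, hy, hy0, hxy⟩
    have h1 : m ≤ x := hmin x ⟨hx, hx0⟩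
    have h2 : 1 ≤ y := Nat.one_le_iff_ne_zero.mpr hy0
    omega
  have hmc : m < c := hleaf hmP
  have hm1 : 1 ≤ m := Nat.one_le_iff_ne_zero.mpr hmS.2
  -- P ∩ L = P
  have hPL : NSprims S ∩ NSLset S = NSprims S := by
    apply Set.inter_eq_left.mpr
    intro x hx
    exact ⟨hx.1, hleaf hx⟩
  -- D_q = [c, c+m-1]
  have hDq : NSDq S = Set.Icc c (c + m - 1) := by
    unfold NSDq
    ext x
    simp only [Set.mem_diff, Set.mem_Icc]
    constructor
    · exact fun h => h.1
    · intro h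
      refine ⟨h, fun hP => ?_⟩
      have := hleaf hP
      simp only [Set.mem_Iio] at this
      omega
  have hDcard : (NSDq S).ncard = m := by
    rw [hDq, ← Finset.coe_Icc, Set.ncard_coe_finset, Nat.card_Icc]
    omega
  -- q * m ≥ c
  have hq : c ≤ NSqnum S * m := by
    have key : NSqnum S * m + (c + m - 1) % m = c + m - 1 := by
      rw [show NSqnum S = (c + m - 1) / m from rfl, mul_comm]
      exact Nat.div_add_mod _ _
    have hmod : (c + m - 1) % m < m := Nat.mod_lt _ (by omega)
    omega
  have hrho : NSrho S = NSqnum S * m - c := rfl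
  unfold NSW0num NSWnum
  rw [hPL, hDcard, hrho]
  rw [Nat.cast_sub hq]
  push_cast
  ring
end

section
/- Let m, a, b be positive integers with (3m+1)/2 ≤ a < b ≤ (5m-1)/3, let A = {a, b}, and suppose the 9 elements of A ∪ 2A ∪ 3A = {a, b, 2a, a+b, 2b, 3a, 2a+b, a+2b, 3b} are pairwise distinct modulo m. Let S = ⟨m, a, b⟩ ∪ [4m, ∞). Then W_0(S) = -1. -/
open Set Pointwise

lemma key_ne {m r s : ℕ} (j k : ℕ) (h : r % m ≠ s % m) : r + j * m ≠ s + k * m := by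
  intro he
  apply h
  rw [← Nat.add_mul_mod_self_right r j m, ← Nat.add_mul_mod_self_right s k m, he]

set_option maxHeartbeats 1000000 in
def QSub (m a b : ℕ) (hm : 0 < m) (ha : 3*m+1 ≤ 2*a) (hab : a < b) (hb : 3*b ≤ 5*m-1) :
    AddSubmonoid ℕ where
  carrier := {n | n = 0 ∨ n = m ∨ n = a ∨ n = b ∨ n = 2*m ∨ n = a+m ∨ n = b+m ∨ n = 3*m ∨
    n = a+2*m ∨ n = b+2*m ∨ n = 2*a ∨ n = a+b ∨ n = 2*b ∨ 4*m ≤ n}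
  zero_mem' := Or.inl rfl
  add_mem' := by
    intro x y hx hy
    simp only [Set.mem_setOf_eq] at *
    rcases hx with h|h|h|h|h|h|h|h|h|h|h|h|h|h <;>
      rcases hy with h'|h'|h'|h'|h'|h'|h'|h'|h'|h'|h'|h'|h'|h' <;> omega

lemma memQ (m a b : ℕ) (hm : 0 < m) (ha : 3 * m + 1 ≤ 2 * a) (hab : a < b)
    (hb : 3 * b ≤ 5 * m - 1) (n : ℕ) :
    n ∈ NSgenUpTo {m, a, b} (4 * m) ↔ (n = 0 ∨ n = m ∨ n = a ∨ n = b ∨ n = 2*m ∨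
      n = a+m ∨ n = b+m ∨ n = 3*m ∨ n = a+2*m ∨ n = b+2*m ∨ n = 2*a ∨ n = a+b ∨ n = 2*b ∨
      4*m ≤ n) := by
  constructor
  · intro hn
    rcases hn with hn | hn
    · have hle : AddSubmonoid.closure ({m, a, b} : Set ℕ) ≤ QSub m a b hm ha hab hb := by
        rw [AddSubmonoid.closure_le]
        intro x hx
        simp only [Set.mem_insert_iff, Set.mem_singleton_iff] at hx
        show x ∈ {n | n = 0 ∨ n = m ∨ n = a ∨ n = b ∨ n = 2*m ∨ n = a+m ∨ n = b+m ∨ n = 3*m ∨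
          n = a+2*m ∨ n = b+2*m ∨ n = 2*a ∨ n = a+b ∨ n = 2*b ∨ 4*m ≤ n}
        simp only [Set.mem_setOf_eq]; omega
      exact hle hn
    · simp only [Set.mem_setOf_eq] at hn; omega
  · intro hn
    have hmS : m ∈ AddSubmonoid.closure ({m, a, b} : Set ℕ) :=
      AddSubmonoid.subset_closure (by simp)
    have haS : a ∈ AddSubmonoid.closure ({m, a, b} : Set ℕ) :=
      AddSubmonoid.subset_closure (by simp)
    have hbS : b ∈ AddSubmonoid.closure ({m, a, b} : Set ℕ) :=
      AddSubmonoid.subset_closure (by simp)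
    rcases hn with h|h|h|h|h|h|h|h|h|h|h|h|h|h
    · exact Or.inl (h ▸ zero_mem _)
    · exact Or.inl (h ▸ hmS)
    · exact Or.inl (h ▸ haS)
    · exact Or.inl (h ▸ hbS)
    · exact Or.inl (by rw [h, two_mul]; exact add_mem hmS hmS)
    · exact Or.inl (h ▸ add_mem haS hmS)
    · exact Or.inl (h ▸ add_mem hbS hmS)
    · exact Or.inl (by rw [h, show 3*m = m + (m+m) by ring]; exact add_mem hmS (add_mem hmS hmS))
    · exact Or.inl (by rw [h, show a+2*m = a + (m+m) by ring]; exact add_mem haS (add_mem hmS hmS))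
    · exact Or.inl (by rw [h, show b+2*m = b + (m+m) by ring]; exact add_mem hbS (add_mem hmS hmS))
    · exact Or.inl (by rw [h, two_mul]; exact add_mem haS haS)
    · exact Or.inl (h ▸ add_mem haS hbS)
    · exact Or.inl (by rw [h, two_mul]; exact add_mem hbS hbS)
    · exact Or.inr h

set_option maxHeartbeats 1000000 in
lemma sum_char (m a b x y : ℕ) (hm : 0 < m) (ha : 3*m+1 ≤ 2*a) (hab : a < b)
    (hb : 3*b ≤ 5*m-1)
    (hx : x = 0 ∨ x = m ∨ x = a ∨ x = b ∨ x = 2*m ∨ x = a+m ∨ x = b+m ∨ x = 3*m ∨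
      x = a+2*m ∨ x = b+2*m ∨ x = 2*a ∨ x = a+b ∨ x = 2*b ∨ 4*m ≤ x)
    (hy : y = 0 ∨ y = m ∨ y = a ∨ y = b ∨ y = 2*m ∨ y = a+m ∨ y = b+m ∨ y = 3*m ∨
      y = a+2*m ∨ y = b+2*m ∨ y = 2*a ∨ y = a+b ∨ y = 2*b ∨ 4*m ≤ y)
    (hx0 : x ≠ 0) (hy0 : y ≠ 0) (h1 : 4*m ≤ x + y) (h2 : x + y ≤ 4*m + m - 1) :
    x+y = 4*m ∨ x+y = a+3*m ∨ x+y = b+3*m ∨ x+y = 2*a+m ∨ x+y = a+b+m ∨ x+y = 2*b+m ∨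
      x+y = 3*a ∨ x+y = 2*a+b ∨ x+y = a+2*b ∨ x+y = 3*b := by
  have hym : m ≤ y := by rcases hy with h|h|h|h|h|h|h|h|h|h|h|h|h|h <;> omega
  have hxm : m ≤ x := by rcases hx with h|h|h|h|h|h|h|h|h|h|h|h|h|h <;> omega
  have hx' : x = m ∨ x = a ∨ x = b ∨ x = 2*m ∨ x = a+m ∨ x = b+m ∨ x = 3*m ∨
      x = a+2*m ∨ x = b+2*m ∨ x = 2*a ∨ x = a+b ∨ x = 2*b := by
    rcases hx with h|h|h|h|h|h|h|h|h|h|h|h|h|h <;> omega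
  have hy' : y = m ∨ y = a ∨ y = b ∨ y = 2*m ∨ y = a+m ∨ y = b+m ∨ y = 3*m ∨
      y = a+2*m ∨ y = b+2*m ∨ y = 2*a ∨ y = a+b ∨ y = 2*b := by
    rcases hy with h|h|h|h|h|h|h|h|h|h|h|h|h|h <;> omega
  clear hx hy hx0 hy0
  rcases hx' with h|h|h|h|h|h|h|h|h|h|h|h <;>
    rcases hy' with h'|h'|h'|h'|h'|h'|h'|h'|h'|h'|h'|h' <;> subst h <;> subst h' <;>
    first
    | (exfalso; omega)
    | (left; omega)
    | (right; left; omega)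
    | (right; right; left; omega)
    | (right; right; right; left; omega)
    | (right; right; right; right; left; omega)
    | (right; right; right; right; right; left; omega)
    | (right; right; right; right; right; right; left; omega)
    | (right; right; right; right; right; right; right; left; omega)
    | (right; right; right; right; right; right; right; right; left; omega)
    | (right; right; right; right; right; right; right; right; right; omega)

set_option maxHeartbeats 1000000 in
lemma Lchar (m a b n : ℕ) (hm : 0 < m) (ha : 3 * m + 1 ≤ 2 * a) (hab : a < b)
    (hb : 3 * b ≤ 5 * m - 1) :
    ((n = 0 ∨ n = m ∨ n = a ∨ n = b ∨ n = 2*m ∨ n = a+m ∨ n = b+m ∨ n = 3*m ∨ n = a+2*m ∨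
      n = b+2*m ∨ n = 2*a ∨ n = a+b ∨ n = 2*b ∨ 4*m ≤ n) ∧ n < 4*m) ↔
    (n = 0 ∨ n = m ∨ n = a ∨ n = b ∨ n = 2*m ∨ n = a+m ∨ n = b+m ∨ n = 3*m ∨ n = a+2*m ∨
      n = b+2*m ∨ n = 2*a ∨ n = a+b ∨ n = 2*b) := by
  constructor
  · rintro ⟨h, h4⟩
    rcases h with h|h|h|h|h|h|h|h|h|h|h|h|h|h <;> omega
  · intro h
    rcases h with h|h|h|h|h|h|h|h|h|h|h|h|h <;> omega


set_option maxHeartbeats 4000000 in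
theorem stmt8 (m a b : ℕ) (hm : 0 < m) (ha : 3 * m + 1 ≤ 2 * a) (hab : a < b)
    (hb : 3 * b ≤ 5 * m - 1)
    (hdist : ([a, b, 2 * a, a + b, 2 * b, 3 * a, 2 * a + b, a + 2 * b, 3 * b] :
        List ℕ).Pairwise (fun x y => x % m ≠ y % m)) :
    NSW0num (NSgenUpTo {m, a, b} (4 * m)) = -1 := by
  set S := NSgenUpTo ({m, a, b} : Set ℕ) (4 * m) with hSdef
  have hQ : ∀ n, n ∈ S ↔ (n = 0 ∨ n = m ∨ n = a ∨ n = b ∨ n = 2*m ∨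
      n = a+m ∨ n = b+m ∨ n = 3*m ∨ n = a+2*m ∨ n = b+2*m ∨ n = 2*a ∨ n = a+b ∨ n = 2*b ∨
      4*m ≤ n) := memQ m a b hm ha hab hb
  -- multiplicity
  have hmemm : m ∈ S \ {0} := ⟨(hQ m).mpr (by omega), by simpa using hm.ne'⟩
  have hmult : NSmult S = m := by
    have h1 : sInf (S \ {0}) ≤ m := Nat.sInf_le hmemm
    have h2 := Nat.sInf_mem ⟨m, hmemm⟩
    obtain ⟨hS2, h02⟩ := h2
    have h3 := (hQ _).mp hS2
    simp only [Set.mem_singleton_iff] at h02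
    show sInf (S \ {0}) = m
    omega
  -- conductor
  have hmem4 : (4*m) ∈ {n | ∀ k, n ≤ k → k ∈ S} := fun k hk => (hQ k).mpr (by omega)
  have hcond : NSconductor S = 4 * m := by
    have h1 : sInf {n | ∀ k, n ≤ k → k ∈ S} ≤ 4*m := Nat.sInf_le hmem4
    have h2 := Nat.sInf_mem ⟨4*m, hmem4⟩
    show sInf {n | ∀ k, n ≤ k → k ∈ S} = 4*m
    by_contra h
    have hlt : sInf {n | ∀ k, n ≤ k → k ∈ S} ≤ 4*m - 1 := by omega
    have h3 := (hQ (4*m-1)).mp (h2 (4*m-1) hlt)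
    omega
  -- q and rho
  have hq : NSqnum S = 4 := by
    unfold NSqnum
    rw [hcond, hmult, show 4*m + m - 1 = (m-1) + 4*m by omega,
      Nat.add_mul_div_right _ _ hm, Nat.div_eq_of_lt (by omega)]
  have hrho : NSrho S = 0 := by
    unfold NSrho
    rw [hq, hmult, hcond]; omega
  -- L set
  have hL : NSLset S = {0, m, a, b, 2*m, a+m, b+m, 3*m, a+2*m, b+2*m, 2*a, a+b, 2*b} := by
    ext n
    simp only [NSLset, Set.mem_inter_iff, Set.mem_Iio, hcond, hQ, Set.mem_insert_iff,
      Set.mem_singleton_iff]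
    exact Lchar m a b n hm ha hab hb
  -- P ∩ L
  have hPL : NSprims S ∩ NSLset S = {m, a, b} := by
    rw [hL]
    ext n
    simp only [NSprims, Set.mem_inter_iff, Set.mem_setOf_eq, Set.mem_insert_iff,
      Set.mem_singleton_iff]
    constructor
    · rintro ⟨⟨hnS, hn0, hndec⟩, hn⟩
      by_contra hc
      push_neg at hc
      apply hndec
      have hmm : m ∈ S := (hQ m).mpr (by omega)
      have h2m : 2*m ∈ S := (hQ (2*m)).mpr (by omega)
      have haa : a ∈ S := (hQ a).mpr (by omega)
      have hbb : b ∈ S := (hQ b).mpr (by omega)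
      rcases hn with h|h|h|h|h|h|h|h|h|h|h|h|h
      · omega
      · exact absurd h (by omega)
      · exact absurd h (by omega)
      · exact absurd h (by omega)
      · exact ⟨m, hmm, by omega, m, hmm, by omega, by omega⟩
      · exact ⟨a, haa, by omega, m, hmm, by omega, by omega⟩
      · exact ⟨b, hbb, by omega, m, hmm, by omega, by omega⟩
      · exact ⟨m, hmm, by omega, 2*m, h2m, by omega, by omega⟩
      · exact ⟨a, haa, by omega, 2*m, h2m, by omega, by omega⟩
      · exact ⟨b, hbb, by omega, 2*m, h2m, by omega, by omega⟩
      · exact ⟨a, haa, by omega, a, haa, by omega, by omega⟩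
      · exact ⟨a, haa, by omega, b, hbb, by omega, by omega⟩
      · exact ⟨b, hbb, by omega, b, hbb, by omega, by omega⟩
    · intro hn
      have hlow : ∀ x, x ∈ S → x ≠ 0 → m ≤ x := by
        intro x hx hx0
        have := (hQ x).mp hx
        omega
      have hnS : n ∈ S := (hQ n).mpr (by omega)
      refine ⟨⟨hnS, by omega, ?_⟩, by omega⟩
      rintro ⟨x, hxS, hx0, y, hyS, hy0, hxy⟩
      have h1 := hlow x hxS hx0
      have h2 := hlow y hyS hy0
      omega
  -- D_q
  have hDq : NSDq S = {4*m, a+3*m, b+3*m, 2*a+m, a+b+m, 2*b+m, 3*a, 2*a+b, a+2*b, 3*b} := by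
    unfold NSDq
    rw [hcond, hmult]
    ext n
    simp only [Set.mem_diff, Set.mem_Icc, NSprims, Set.mem_setOf_eq, Set.mem_insert_iff,
      Set.mem_singleton_iff]
    constructor
    · rintro ⟨⟨hn1, hn2⟩, hnP⟩
      have hnS : n ∈ S := (hQ n).mpr (by omega)
      have hdec : ∃ x, x ∈ S ∧ x ≠ 0 ∧ ∃ y, y ∈ S ∧ y ≠ 0 ∧ n = x + y := by
        by_contra hc
        exact hnP ⟨hnS, by omega, hc⟩
      obtain ⟨x, hxS, hx0, y, hyS, hy0, hxy⟩ := hdec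
      have hx := (hQ x).mp hxS
      have hy := (hQ y).mp hyS
      subst hxy
      exact sum_char m a b x y hm ha hab hb hx hy hx0 hy0 (by omega) (by omega)
    · intro hn
      have hmm : m ∈ S := (hQ m).mpr (by omega)
      have h3m : 3*m ∈ S := (hQ (3*m)).mpr (by omega)
      have haa : a ∈ S := (hQ a).mpr (by omega)
      have hbb : b ∈ S := (hQ b).mpr (by omega)
      have ham : a+m ∈ S := (hQ (a+m)).mpr (by omega)
      have hbm : b+m ∈ S := (hQ (b+m)).mpr (by omega)
      have h2a : 2*a ∈ S := (hQ (2*a)).mpr (by omega)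
      have hab2 : a+b ∈ S := (hQ (a+b)).mpr (by omega)
      have h2b : 2*b ∈ S := (hQ (2*b)).mpr (by omega)
      refine ⟨⟨by omega, by omega⟩, ?_⟩
      rintro ⟨-, -, hndec⟩
      apply hndec
      rcases hn with h|h|h|h|h|h|h|h|h|h
      · exact ⟨m, hmm, by omega, 3*m, h3m, by omega, by omega⟩
      · exact ⟨a, haa, by omega, 3*m, h3m, by omega, by omega⟩
      · exact ⟨b, hbb, by omega, 3*m, h3m, by omega, by omega⟩
      · exact ⟨a, haa, by omega, a+m, ham, by omega, by omega⟩
      · exact ⟨a, haa, by omega, b+m, hbm, by omega, by omega⟩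
      · exact ⟨b, hbb, by omega, b+m, hbm, by omega, by omega⟩
      · exact ⟨a, haa, by omega, 2*a, h2a, by omega, by omega⟩
      · exact ⟨a, haa, by omega, a+b, hab2, by omega, by omega⟩
      · exact ⟨b, hbb, by omega, a+b, hab2, by omega, by omega⟩
      · exact ⟨b, hbb, by omega, 2*b, h2b, by omega, by omega⟩
  clear hQ hmemm hmem4
  -- extract mod facts
  simp only [List.pairwise_cons, List.mem_cons, List.not_mem_nil, List.mem_singleton,
    forall_eq_or_imp, forall_eq, List.Pairwise.nil, and_true] at hdist
  obtain ⟨⟨-, d_a_2a, d_a_ab, d_a_2b, d_a_3a, d_a_2ab, d_a_a2b, d_a_3b, -⟩,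
    ⟨d_b_2a, d_b_ab, d_b_2b, d_b_3a, d_b_2ab, d_b_a2b, d_b_3b, -⟩,
    ⟨d_2a_ab, d_2a_2b, d_2a_3a, d_2a_2ab, d_2a_a2b, d_2a_3b, -⟩,
    ⟨d_ab_2b, d_ab_3a, d_ab_2ab, d_ab_a2b, d_ab_3b, -⟩,
    ⟨d_2b_3a, d_2b_2ab, d_2b_a2b, d_2b_3b, -⟩,
    ⟨d_3a_2ab, d_3a_a2b, d_3a_3b, -⟩, ⟨d_2ab_a2b, d_2ab_3b, -⟩, ⟨d_a2b_3b, -⟩, -⟩ := hdist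
  -- derived integer disequalities
  have n1 : 2*b ≠ a + 2*m := by have := key_ne 0 2 (Ne.symm d_a_2b); omega
  have n2 : 2*a ≠ b + 2*m := by have := key_ne 0 2 (Ne.symm d_b_2a); omega
  have n3 : a + 3*m ≠ 2*b + m := by have := key_ne 3 1 d_a_2b; omega
  have n4 : a + 3*m ≠ 3*b := by have := key_ne 3 0 d_a_3b; omega
  have n5 : b + 3*m ≠ 2*a + m := by have := key_ne 3 1 d_b_2a; omega
  have n6 : b + 3*m ≠ 3*a := by have := key_ne 3 0 d_b_3a; omega
  have n7 : 2*a + m ≠ 3*b := by have := key_ne 1 0 d_2a_3b; omega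
  have n8 : a + b + m ≠ 3*a := by have := key_ne (r := a + b) 1 0 d_ab_3a; omega
  have n9 : a + b + m ≠ 3*b := by have := key_ne (r := a + b) 1 0 d_ab_3b; omega
  have n10 : 2*b + m ≠ 3*a := by have := key_ne 1 0 d_2b_3a; omega
  have n11 : 2*b + m ≠ 2*a + b := by have := key_ne 1 0 d_2b_2ab; omega
  clear d_a_2a d_a_ab d_a_3a d_a_2ab d_a_a2b d_b_ab d_b_2b d_b_2ab d_b_a2b d_b_3b
  clear d_2a_ab d_2a_2b d_2a_3a d_2a_2ab d_2a_a2b d_ab_2b d_ab_2ab d_ab_a2b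
  clear d_2b_a2b d_2b_3b d_3a_2ab d_3a_a2b d_3a_3b d_2ab_a2b d_2ab_3b d_a2b_3b
  clear d_a_2b d_b_2a d_a_3b d_b_3a d_2a_3b d_ab_3a d_ab_3b d_2b_3a d_2b_2ab
  -- cardinalities
  have hcard1 : (NSprims S ∩ NSLset S).ncard = 3 := by
    rw [hPL]
    rw [Set.ncard_insert_of_notMem
        (by simp only [Set.mem_insert_iff, Set.mem_singleton_iff]; omega),
      Set.ncard_insert_of_notMem (by simp only [Set.mem_singleton_iff]; omega),
      Set.ncard_singleton]
  have hcard2 : (NSLset S).ncard = 13 := by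
    rw [hL]
    repeat rw [Set.ncard_insert_of_notMem
      (by simp only [Set.mem_insert_iff, Set.mem_singleton_iff]; omega)]
    rw [Set.ncard_singleton]
  have hcard3 : (NSDq S).ncard = 10 := by
    rw [hDq]
    repeat rw [Set.ncard_insert_of_notMem
      (by simp only [Set.mem_insert_iff, Set.mem_singleton_iff]; omega)]
    rw [Set.ncard_singleton]
  unfold NSW0num
  rw [hcard1, hcard2, hcard3, hq, hrho]
  norm_num
end

section
/- Let m, a, b be positive integers with (3m+1)/2 ≤ a < b ≤ (5m-1)/3. Then the numerical semigroup S = ⟨m, a, b⟩ ∪ [4m, ∞) has conductor exactly 4m (i.e., 4m - 1 ∉ S). -/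
open Set Pointwise

theorem stmt9 (m a b : ℕ) (hm : 0 < m) (ha : 3 * m + 1 ≤ 2 * a) (hab : a < b)
    (hb : 3 * b ≤ 5 * m - 1) :
    NSconductor (NSgenUpTo {m, a, b} (4 * m)) = 4 * m := by
  have hm11 : 11 ≤ m := by omega
  set T : AddSubmonoid ℕ :=
    { carrier := {n | ∃ x y z, n = x * m + y * a + z * b}
      zero_mem' := ⟨0, 0, 0, by simp⟩
      add_mem' := by
        rintro p q ⟨x, y, z, rfl⟩ ⟨x', y', z', rfl⟩
        exact ⟨x + x', y + y', z + z', by ring⟩ } with hT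
  have hsub : AddSubmonoid.closure ({m, a, b} : Set ℕ) ≤ T := by
    rw [AddSubmonoid.closure_le]
    intro w hw
    simp only [Set.mem_insert_iff, Set.mem_singleton_iff] at hw
    rcases hw with rfl | rfl | rfl
    · exact ⟨1, 0, 0, by ring⟩
    · exact ⟨0, 1, 0, by ring⟩
    · exact ⟨0, 0, 1, by ring⟩
  have hnot : (4 * m - 1) ∉ NSgenUpTo {m, a, b} (4 * m) := by
    intro hmem
    rcases hmem with h | h
    · obtain ⟨x, y, z, hxyz⟩ := hsub h
      have h2 : x * m + y * a + z * b + 1 = 4 * m := by rw [← hxyz]; omega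
      have hxm : x * m < 5 * m := by
        nlinarith [Nat.zero_le (y * a), Nat.zero_le (z * b)]
      have hx : x < 5 := Nat.lt_of_mul_lt_mul_right hxm
      have hya : y * a < 3 * a := by
        nlinarith [Nat.zero_le (x * m), Nat.zero_le (z * b)]
      have hy : y < 3 := Nat.lt_of_mul_lt_mul_right hya
      have hzb : z * b < 3 * b := by
        nlinarith [Nat.zero_le (x * m), Nat.zero_le (y * a)]
      have hz : z < 3 := Nat.lt_of_mul_lt_mul_right hzb
      interval_cases x <;> interval_cases y <;> interval_cases z <;> omega
    · simp only [Set.mem_setOf_eq] at h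
      omega
  have hmem4 : 4 * m ∈ {n | ∀ k, n ≤ k → k ∈ NSgenUpTo {m, a, b} (4 * m)} :=
    fun k hk => Or.inr hk
  unfold NSconductor
  refine le_antisymm (Nat.sInf_le hmem4) ?_
  by_contra hlt
  push_neg at hlt
  have hne : {n | ∀ k, n ≤ k → k ∈ NSgenUpTo {m, a, b} (4 * m)}.Nonempty := ⟨4 * m, hmem4⟩
  have hmin := Nat.sInf_mem hne
  exact hnot (hmin (4 * m - 1) (by omega))
end

section
/- Let k, m be integers with k ≥ 2, m ≥ 3k + 8, and m ≡ k (mod 2). Let a = (3m + k)/2 and S = ⟨m, a, a+1⟩ ∪ [4m, ∞). Then W_0(S) = -1. -/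
open Set Pointwise

section Aux
variable {k m a : ℕ}

lemma schar (hk : 2 ≤ k) (hm : 3*k+8 ≤ m) (had : 2*a = 3*m+k) (n : ℕ) :
    n ∈ NSgenUpTo {m, a, a+1} (4*m) ↔
      (n = 0 ∨ n = m ∨ n = a ∨ n = a+1 ∨ n = 2*m ∨ n = a+m ∨ n = a+m+1 ∨ n = 3*m
        ∨ n = 2*a ∨ n = 2*a+1 ∨ n = 2*a+2 ∨ n = a+2*m ∨ n = a+2*m+1 ∨ 4*m ≤ n) := by
  simp only [NSgenUpTo, Set.mem_union, SetLike.mem_coe, Set.mem_setOf_eq]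
  constructor
  · rintro (hn | hn)
    · refine AddSubmonoid.closure_induction ?_ ?_ ?_ hn
      · intro x hx
        simp only [Set.mem_insert_iff, Set.mem_singleton_iff] at hx
        omega
      · omega
      · intro x y _ _ ihx ihy
        omega
    · omega
  · intro hn
    have hmc : m ∈ AddSubmonoid.closure ({m, a, a+1} : Set ℕ) :=
      AddSubmonoid.subset_closure (by simp)
    have hac : a ∈ AddSubmonoid.closure ({m, a, a+1} : Set ℕ) :=
      AddSubmonoid.subset_closure (by simp)
    have ha1 : a+1 ∈ AddSubmonoid.closure ({m, a, a+1} : Set ℕ) :=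
      AddSubmonoid.subset_closure (by simp)
    rcases hn with h|h|h|h|h|h|h|h|h|h|h|h|h|h
    · exact Or.inl (h ▸ zero_mem _)
    · exact Or.inl (h ▸ hmc)
    · exact Or.inl (h ▸ hac)
    · exact Or.inl (h ▸ ha1)
    · exact Or.inl (by rw [h, show 2*m = m + m by ring]; exact add_mem hmc hmc)
    · exact Or.inl (h ▸ add_mem hac hmc)
    · exact Or.inl (by rw [h, show a+m+1 = (a+1) + m by ring]; exact add_mem ha1 hmc)
    · exact Or.inl (by rw [h, show 3*m = m + (m + m) by ring]; exact add_mem hmc (add_mem hmc hmc))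
    · exact Or.inl (by rw [h, show 2*a = a + a by ring]; exact add_mem hac hac)
    · exact Or.inl (by rw [h, show 2*a+1 = a + (a+1) by ring]; exact add_mem hac ha1)
    · exact Or.inl (by rw [h, show 2*a+2 = (a+1) + (a+1) by ring]; exact add_mem ha1 ha1)
    · exact Or.inl (by rw [h, show a+2*m = a + (m + m) by ring]; exact add_mem hac (add_mem hmc hmc))
    · exact Or.inl (by rw [h, show a+2*m+1 = (a+1) + (m + m) by ring]; exact add_mem ha1 (add_mem hmc hmc))
    · exact Or.inr h

lemma smult (hk : 2 ≤ k) (hm : 3*k+8 ≤ m) (had : 2*a = 3*m+k) :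
    NSmult (NSgenUpTo {m, a, a+1} (4*m)) = m := by
  have hmem : m ∈ NSgenUpTo {m, a, a+1} (4*m) \ {0} :=
    ⟨(schar hk hm had m).mpr (by omega), by simp; omega⟩
  have h1 : NSmult (NSgenUpTo {m, a, a+1} (4*m)) ≤ m := Nat.sInf_le hmem
  have h2 := Nat.sInf_mem (⟨m, hmem⟩ : (NSgenUpTo {m, a, a+1} (4*m) \ {0}).Nonempty)
  have h3 := (schar hk hm had _).mp h2.1
  have h4 : sInf (NSgenUpTo {m, a, a+1} (4*m) \ {0}) ≠ 0 := by simpa using h2.2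
  rw [NSmult]
  rw [NSmult] at h1
  omega

lemma scond (hk : 2 ≤ k) (hm : 3*k+8 ≤ m) (had : 2*a = 3*m+k) :
    NSconductor (NSgenUpTo {m, a, a+1} (4*m)) = 4*m := by
  have hmem : 4*m ∈ {n | ∀ j, n ≤ j → j ∈ NSgenUpTo {m, a, a+1} (4*m)} :=
    fun j hj => (schar hk hm had j).mpr (by omega)
  have h1 : NSconductor (NSgenUpTo {m, a, a+1} (4*m)) ≤ 4*m := Nat.sInf_le hmem
  have h2 := Nat.sInf_mem (⟨4*m, hmem⟩ :
    {n | ∀ j, n ≤ j → j ∈ NSgenUpTo {m, a, a+1} (4*m)}.Nonempty)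
  rw [NSconductor] at h1 ⊢
  by_contra hne
  have h3 := (schar hk hm had (4*m-1)).mp (h2 (4*m-1) (by omega))
  omega

lemma sLset (hk : 2 ≤ k) (hm : 3*k+8 ≤ m) (had : 2*a = 3*m+k) :
    NSLset (NSgenUpTo {m, a, a+1} (4*m)) =
      ({0, m, a, a+1, 2*m, a+m, a+m+1, 3*m, 2*a, 2*a+1, 2*a+2, a+2*m, a+2*m+1} : Set ℕ) := by
  ext n
  simp only [NSLset, Set.mem_inter_iff, Set.mem_Iio, scond hk hm had, schar hk hm had,
    Set.mem_insert_iff, Set.mem_singleton_iff]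
  omega

lemma sprimL (hk : 2 ≤ k) (hm : 3*k+8 ≤ m) (had : 2*a = 3*m+k) :
    NSprims (NSgenUpTo {m, a, a+1} (4*m)) ∩ NSLset (NSgenUpTo {m, a, a+1} (4*m)) =
      ({m, a, a+1} : Set ℕ) := by
  have hmm : m ∈ NSgenUpTo {m, a, a+1} (4*m) := (schar hk hm had m).mpr (by omega)
  have ham : a ∈ NSgenUpTo {m, a, a+1} (4*m) := (schar hk hm had a).mpr (by omega)
  have ha1m : a+1 ∈ NSgenUpTo {m, a, a+1} (4*m) := (schar hk hm had (a+1)).mpr (by omega)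
  have h2m : 2*m ∈ NSgenUpTo {m, a, a+1} (4*m) := (schar hk hm had (2*m)).mpr (by omega)
  ext n
  simp only [Set.mem_inter_iff, NSprims, Set.mem_setOf_eq, NSLset, Set.mem_Iio,
    scond hk hm had, Set.mem_insert_iff, Set.mem_singleton_iff]
  constructor
  · rintro ⟨⟨hnS, hn0, hnd⟩, _, hnlt⟩
    have hd := (schar hk hm had n).mp hnS
    rcases hd with h|h|h|h|h|h|h|h|h|h|h|h|h|h
    · omega
    · omega
    · omega
    · omega
    · exact absurd ⟨m, hmm, by omega, m, hmm, by omega, by omega⟩ hnd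
    · exact absurd ⟨a, ham, by omega, m, hmm, by omega, by omega⟩ hnd
    · exact absurd ⟨a+1, ha1m, by omega, m, hmm, by omega, by omega⟩ hnd
    · exact absurd ⟨m, hmm, by omega, 2*m, h2m, by omega, by omega⟩ hnd
    · exact absurd ⟨a, ham, by omega, a, ham, by omega, by omega⟩ hnd
    · exact absurd ⟨a, ham, by omega, a+1, ha1m, by omega, by omega⟩ hnd
    · exact absurd ⟨a+1, ha1m, by omega, a+1, ha1m, by omega, by omega⟩ hnd
    · exact absurd ⟨a, ham, by omega, 2*m, h2m, by omega, by omega⟩ hnd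
    · exact absurd ⟨a+1, ha1m, by omega, 2*m, h2m, by omega, by omega⟩ hnd
    · omega
  · intro h
    have hnS : n ∈ NSgenUpTo {m, a, a+1} (4*m) := (schar hk hm had n).mpr (by omega)
    refine ⟨⟨hnS, by omega, ?_⟩, hnS, by omega⟩
    rintro ⟨x, hx, hx0, y, hy, hy0, hxy⟩
    have hx' := (schar hk hm had x).mp hx
    have hy' := (schar hk hm had y).mp hy
    omega

lemma sDq (hk : 2 ≤ k) (hm : 3*k+8 ≤ m) (had : 2*a = 3*m+k) :
    NSDq (NSgenUpTo {m, a, a+1} (4*m)) =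
      ({4*m, 2*a+m, 2*a+m+1, 2*a+m+2, a+3*m, a+3*m+1, 3*a, 3*a+1, 3*a+2, 3*a+3} : Set ℕ) := by
  have hmm : m ∈ NSgenUpTo {m, a, a+1} (4*m) := (schar hk hm had m).mpr (by omega)
  have ham : a ∈ NSgenUpTo {m, a, a+1} (4*m) := (schar hk hm had a).mpr (by omega)
  have ha1m : a+1 ∈ NSgenUpTo {m, a, a+1} (4*m) := (schar hk hm had (a+1)).mpr (by omega)
  have h2m : 2*m ∈ NSgenUpTo {m, a, a+1} (4*m) := (schar hk hm had (2*m)).mpr (by omega)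
  have ham' : a+m ∈ NSgenUpTo {m, a, a+1} (4*m) := (schar hk hm had (a+m)).mpr (by omega)
  have ham1 : a+m+1 ∈ NSgenUpTo {m, a, a+1} (4*m) := (schar hk hm had (a+m+1)).mpr (by omega)
  have h2am : a+2*m ∈ NSgenUpTo {m, a, a+1} (4*m) := (schar hk hm had (a+2*m)).mpr (by omega)
  have h2am1 : a+2*m+1 ∈ NSgenUpTo {m, a, a+1} (4*m) := (schar hk hm had (a+2*m+1)).mpr (by omega)
  have h2a : 2*a ∈ NSgenUpTo {m, a, a+1} (4*m) := (schar hk hm had (2*a)).mpr (by omega)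
  have h2a1 : 2*a+1 ∈ NSgenUpTo {m, a, a+1} (4*m) := (schar hk hm had (2*a+1)).mpr (by omega)
  have h2a2 : 2*a+2 ∈ NSgenUpTo {m, a, a+1} (4*m) := (schar hk hm had (2*a+2)).mpr (by omega)
  ext n
  simp only [NSDq, Set.mem_diff, Set.mem_Icc, scond hk hm had, smult hk hm had, NSprims,
    Set.mem_setOf_eq, Set.mem_insert_iff, Set.mem_singleton_iff]
  constructor
  · rintro ⟨⟨h1, h2⟩, hnp⟩
    have hnS : n ∈ NSgenUpTo {m, a, a+1} (4*m) := (schar hk hm had n).mpr (by omega)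
    have hd : ∃ x, x ∈ NSgenUpTo {m, a, a+1} (4*m) ∧ x ≠ 0 ∧
        ∃ y, y ∈ NSgenUpTo {m, a, a+1} (4*m) ∧ y ≠ 0 ∧ n = x + y := by
      by_contra hno
      exact hnp ⟨hnS, by omega, hno⟩
    obtain ⟨x, hx, hx0, y, hy, hy0, hxy⟩ := hd
    have hx' := (schar hk hm had x).mp hx
    have hy' := (schar hk hm had y).mp hy
    omega
  · intro h
    refine ⟨by omega, ?_⟩
    rintro ⟨_, _, hnd⟩
    rcases h with h|h|h|h|h|h|h|h|h|h
    · exact hnd ⟨2*m, h2m, by omega, 2*m, h2m, by omega, by omega⟩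
    · exact hnd ⟨a, ham, by omega, a+m, ham', by omega, by omega⟩
    · exact hnd ⟨a, ham, by omega, a+m+1, ham1, by omega, by omega⟩
    · exact hnd ⟨a+1, ha1m, by omega, a+m+1, ham1, by omega, by omega⟩
    · exact hnd ⟨m, hmm, by omega, a+2*m, h2am, by omega, by omega⟩
    · exact hnd ⟨m, hmm, by omega, a+2*m+1, h2am1, by omega, by omega⟩
    · exact hnd ⟨a, ham, by omega, 2*a, h2a, by omega, by omega⟩
    · exact hnd ⟨a, ham, by omega, 2*a+1, h2a1, by omega, by omega⟩
    · exact hnd ⟨a, ham, by omega, 2*a+2, h2a2, by omega, by omega⟩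
    · exact hnd ⟨a+1, ha1m, by omega, 2*a+2, h2a2, by omega, by omega⟩

end Aux

theorem stmt10 (k m a : ℕ) (hk : 2 ≤ k) (hm : 3 * k + 8 ≤ m)
    (hpar : m % 2 = k % 2) (hadef : 2 * a = 3 * m + k) :
    NSW0num (NSgenUpTo {m, a, a + 1} (4 * m)) = -1 := by
  have hq : NSqnum (NSgenUpTo {m, a, a + 1} (4 * m)) = 4 := by
    rw [NSqnum, scond hk hm hadef, smult hk hm hadef,
      show 4*m + m - 1 = m * 4 + (m-1) by omega, Nat.mul_add_div (by omega),
      Nat.div_eq_of_lt (by omega)]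
  have hrho : NSrho (NSgenUpTo {m, a, a + 1} (4 * m)) = 0 := by
    rw [NSrho, hq, scond hk hm hadef, smult hk hm hadef]
    omega
  have hL : (NSLset (NSgenUpTo {m, a, a + 1} (4 * m))).ncard = 13 := by
    rw [sLset hk hm hadef,
      Set.ncard_insert_of_notMem (by simp only [Set.mem_insert_iff, Set.mem_singleton_iff]; omega),
      Set.ncard_insert_of_notMem (by simp only [Set.mem_insert_iff, Set.mem_singleton_iff]; omega),
      Set.ncard_insert_of_notMem (by simp only [Set.mem_insert_iff, Set.mem_singleton_iff]; omega),
      Set.ncard_insert_of_notMem (by simp only [Set.mem_insert_iff, Set.mem_singleton_iff]; omega),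
      Set.ncard_insert_of_notMem (by simp only [Set.mem_insert_iff, Set.mem_singleton_iff]; omega),
      Set.ncard_insert_of_notMem (by simp only [Set.mem_insert_iff, Set.mem_singleton_iff]; omega),
      Set.ncard_insert_of_notMem (by simp only [Set.mem_insert_iff, Set.mem_singleton_iff]; omega),
      Set.ncard_insert_of_notMem (by simp only [Set.mem_insert_iff, Set.mem_singleton_iff]; omega),
      Set.ncard_insert_of_notMem (by simp only [Set.mem_insert_iff, Set.mem_singleton_iff]; omega),
      Set.ncard_insert_of_notMem (by simp only [Set.mem_insert_iff, Set.mem_singleton_iff]; omega),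
      Set.ncard_insert_of_notMem (by simp only [Set.mem_insert_iff, Set.mem_singleton_iff]; omega),
      Set.ncard_insert_of_notMem (by simp only [Set.mem_insert_iff, Set.mem_singleton_iff]; omega),
      Set.ncard_singleton]
  have hP : (NSprims (NSgenUpTo {m, a, a + 1} (4 * m)) ∩
      NSLset (NSgenUpTo {m, a, a + 1} (4 * m))).ncard = 3 := by
    rw [sprimL hk hm hadef,
      Set.ncard_insert_of_notMem (by simp only [Set.mem_insert_iff, Set.mem_singleton_iff]; omega),
      Set.ncard_insert_of_notMem (by simp only [Set.mem_singleton_iff]; omega),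
      Set.ncard_singleton]
  have hD : (NSDq (NSgenUpTo {m, a, a + 1} (4 * m))).ncard = 10 := by
    rw [sDq hk hm hadef,
      Set.ncard_insert_of_notMem (by simp only [Set.mem_insert_iff, Set.mem_singleton_iff]; omega),
      Set.ncard_insert_of_notMem (by simp only [Set.mem_insert_iff, Set.mem_singleton_iff]; omega),
      Set.ncard_insert_of_notMem (by simp only [Set.mem_insert_iff, Set.mem_singleton_iff]; omega),
      Set.ncard_insert_of_notMem (by simp only [Set.mem_insert_iff, Set.mem_singleton_iff]; omega),
      Set.ncard_insert_of_notMem (by simp only [Set.mem_insert_iff, Set.mem_singleton_iff]; omega),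
      Set.ncard_insert_of_notMem (by simp only [Set.mem_insert_iff, Set.mem_singleton_iff]; omega),
      Set.ncard_insert_of_notMem (by simp only [Set.mem_insert_iff, Set.mem_singleton_iff]; omega),
      Set.ncard_insert_of_notMem (by simp only [Set.mem_insert_iff, Set.mem_singleton_iff]; omega),
      Set.ncard_insert_of_notMem (by simp only [Set.mem_insert_iff, Set.mem_singleton_iff]; omega),
      Set.ncard_singleton]
  rw [NSW0num, hq, hrho, hL, hP, hD]
  norm_num
end

section
/- If A is a finite nonempty subset of an abelian group and h ≥ 2, and A is a B_h set (i.e., |hA| = C(|A|+h-1, h)), then A is a B_{h-1} set (i.e., |(h-1)A| = C(|A|+h-2, h-1)). -/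
open Set Pointwise

lemma mem_hfold {G : Type*} [AddCommMonoid G] {A : Set G} {k : ℕ} {x : G} :
    x ∈ hfold k A ↔ ∃ m : Multiset G, Multiset.card m = k ∧ (∀ a ∈ m, a ∈ A) ∧ m.sum = x := by
  induction k generalizing x with
  | zero =>
    simp only [hfold, Set.mem_singleton_iff]
    constructor
    · rintro rfl; exact ⟨0, by simp⟩
    · rintro ⟨m, hc, -, rfl⟩
      rw [Multiset.card_eq_zero] at hc; subst hc; simp
  | succ k ih =>
    simp only [hfold, Set.mem_add]
    constructor
    · rintro ⟨a, ha, b, hb, rfl⟩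
      obtain ⟨m, hc, hm, rfl⟩ := ih.mp hb
      exact ⟨a ::ₘ m, by simp [hc], by
        intro x hx
        rcases Multiset.mem_cons.mp hx with rfl | hx
        · exact ha
        · exact hm x hx, by simp⟩
    · rintro ⟨m, hc, hm, rfl⟩
      have hne : m ≠ 0 := by
        intro h0; subst h0; simp at hc
      obtain ⟨a, ha⟩ := Multiset.exists_mem_of_ne_zero hne
      obtain ⟨m', rfl⟩ := Multiset.exists_cons_of_mem ha
      refine ⟨a, hm a ha, m'.sum, ih.mpr ⟨m', ?_, fun x hx => hm x (Multiset.mem_cons_of_mem hx), rfl⟩, by simp⟩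
      simpa using hc

lemma hfold_eq_image {G : Type*} [AddCommMonoid G] [DecidableEq G] (s : Finset G) (k : ℕ) :
    hfold k (↑s : Set G) = ↑((s.sym k).image fun p : Sym G k => (↑p : Multiset G).sum) := by
  ext x
  simp only [Finset.coe_image, Set.mem_image, Finset.mem_coe, Finset.mem_sym_iff, mem_hfold]
  constructor
  · rintro ⟨m, hc, hm, rfl⟩
    exact ⟨⟨m, hc⟩, fun a ha => hm a ha, rfl⟩
  · rintro ⟨p, hp, rfl⟩
    exact ⟨↑p, p.2, fun a ha => hp a ha, rfl⟩

lemma card_finset_sym {α : Type*} [DecidableEq α] (s : Finset α) (n : ℕ) :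
    (s.sym n).card = (s.card + n - 1).choose n := by
  classical
  rw [← Fintype.card_coe s, ← Sym.card_sym_eq_choose, ← Finset.card_univ,
    ← Finset.card_image_of_injective Finset.univ (Sym.map_injective Subtype.val_injective n)]
  congr 1
  ext m
  simp only [Finset.mem_image, Finset.mem_univ, true_and, Finset.mem_sym_iff]
  constructor
  · intro hm
    refine ⟨m.attach.map (fun x => ⟨x.1, hm x.1 x.2⟩), ?_⟩
    rw [Sym.map_map]
    exact m.attach_map_coe
  · rintro ⟨m', rfl⟩ a ha
    obtain ⟨b, -, rfl⟩ := Sym.mem_map.mp ha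
    exact b.2

theorem stmt13 {G : Type*} [AddCommGroup G] (A : Set G) (hfin : A.Finite)
    (hne : A.Nonempty) (h : ℕ) (hh : 2 ≤ h) (hB : IsBh h A) :
    IsBh (h - 1) A := by
  classical
  obtain ⟨k, rfl⟩ : ∃ k, h = k + 1 := ⟨h - 1, (Nat.succ_pred_eq_of_pos (by omega)).symm⟩
  have hA : (↑hfin.toFinset : Set G) = A := hfin.coe_toFinset
  rw [← hA] at hB hne ⊢
  set s : Finset G := hfin.toFinset
  unfold IsBh at hB ⊢
  rw [hfold_eq_image, Set.ncard_coe_finset, Set.ncard_coe_finset] at hB ⊢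
  have hle : (s.sym (k + 1)).card = (s.card + (k + 1) - 1).choose (k + 1) := by
    rw [card_finset_sym]
  have hinj : Set.InjOn (fun p : Sym G (k + 1) => (↑p : Multiset G).sum) (s.sym (k + 1)) := by
    rw [← Finset.card_image_iff]
    rw [hB, ← hle]
  obtain ⟨a, has⟩ := hne
  rw [Finset.mem_coe] at has
  have hinj' : Set.InjOn (fun p : Sym G k => (↑p : Multiset G).sum) (s.sym k) := by
    intro p hp q hq hpq
    simp only [Finset.mem_coe, Finset.mem_sym_iff] at hp hq
    have hmem : ∀ r : Sym G k, (∀ b ∈ r, b ∈ s) → (a ::ₛ r) ∈ s.sym (k + 1) := by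
      intro r hr
      rw [Finset.mem_sym_iff]
      intro b hb
      rcases Sym.mem_cons.mp hb with rfl | hb
      · exact has
      · exact hr b hb
    have := hinj (Finset.mem_coe.mpr (hmem p hp)) (Finset.mem_coe.mpr (hmem q hq)) (by
      simp only [Sym.coe_cons, Multiset.sum_cons]
      simpa using congrArg (a + ·) hpq)
    have hcoe : (↑(a ::ₛ p) : Multiset G) = ↑(a ::ₛ q) := congrArg _ this
    simp only [Sym.coe_cons] at hcoe
    exact Sym.coe_injective ((Multiset.cons_inj_right a).mp hcoe)
  have hk : k + 1 - 1 = k := rfl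
  rw [hk, Finset.card_image_of_injOn hinj', card_finset_sym]
end

section
/- Let n ≥ 3 be an integer, A' ⊆ ℕ a B₃ set of cardinality n-1 with 0 ∈ A', r = max A'. Let k, m be positive integers with k ≥ r+1, m ≥ 3k + 6r + 2, and m ≡ k (mod 2). Let a = (3m+k)/2, A = a + A' (translate), and S = ⟨{m} ∪ A⟩ ∪ [4m, ∞). Then W_0(S) = -C(n, 3). -/
open Set Pointwise

/- ## Auxiliary lemmas -/

lemma ch2' : ∀ p : ℕ, 2 * (p+1).choose 2 = (p+1) * p := by
  intro p
  induction p with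
  | zero => rfl
  | succ p ih =>
    rw [Nat.choose_succ_succ (p+1) 1, Nat.mul_add, ih, Nat.choose_one_right]
    ring

lemma ch3' : ∀ p : ℕ, 3 * (p+2).choose 3 = p * (p+2).choose 2 := by
  intro p
  induction p with
  | zero => rfl
  | succ p ih =>
    rw [Nat.choose_succ_succ (p+2) 2, Nat.mul_add, ih]
    have h2 := ch2' (p+1)
    have h2' := ch2' (p+2)
    rw [Nat.choose_succ_succ (p+2) 1, Nat.choose_one_right]
    nlinarith [h2, h2']

noncomputable def symSum (F : Finset ℕ) (h : ℕ) (s : Sym {x // x ∈ F} h) : ℕ :=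
  ((s.map Subtype.val : Sym ℕ h) : Multiset ℕ).sum

lemma symSum_cons (F : Finset ℕ) (h : ℕ) (a : {x // x ∈ F}) (s : Sym {x // x ∈ F} h) :
    symSum F (h+1) (a ::ₛ s) = (a : ℕ) + symSum F h s := by
  simp [symSum, Sym.map_cons, Sym.coe_cons]

lemma hfold_eq_range (F : Finset ℕ) (h : ℕ) :
    hfold h (↑F : Set ℕ) = Set.range (symSum F h) := by
  induction h with
  | zero =>
    ext x
    simp only [hfold, Set.mem_singleton_iff, Set.mem_range]
    constructor
    · rintro rfl
      exact ⟨Sym.nil, by simp [symSum]⟩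
    · rintro ⟨s, rfl⟩
      rw [Sym.eq_nil_of_card_zero s]
      simp [symSum]
  | succ h ih =>
    ext x
    simp only [hfold, Set.mem_add, ih, Set.mem_range]
    constructor
    · rintro ⟨y, hy, z, ⟨s, rfl⟩, rfl⟩
      exact ⟨(⟨y, hy⟩ : {x // x ∈ F}) ::ₛ s, by rw [symSum_cons]⟩
    · rintro ⟨s, rfl⟩
      obtain ⟨a, s', rfl⟩ := Sym.exists_eq_cons_of_succ s
      exact ⟨(a : ℕ), a.2, symSum F h s', ⟨s', rfl⟩, (symSum_cons F h a s').symm⟩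

lemma ncard_hfold (F : Finset ℕ) (h : ℕ) :
    (hfold h (↑F : Set ℕ)).ncard = (Finset.univ.image (symSum F h)).card := by
  rw [hfold_eq_range]
  rw [show Set.range (symSum F h) = ↑(Finset.univ.image (symSum F h)) by
    rw [Finset.coe_image, Finset.coe_univ, Set.image_univ]]
  exact Set.ncard_coe_finset _

lemma card_B2_of_B3 (F : Finset ℕ) (h0 : 0 ∈ F)
    (h3 : (hfold 3 (↑F : Set ℕ)).ncard = (F.card + 2).choose 3) :
    (hfold 2 (↑F : Set ℕ)).ncard = (F.card + 1).choose 2 := by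
  rw [ncard_hfold] at h3 ⊢
  have hc3 : Fintype.card (Sym {x // x ∈ F} 3) = (F.card + 2).choose 3 := by
    rw [Sym.card_sym_eq_choose, Fintype.card_coe]; congr 1
  have hc2 : Fintype.card (Sym {x // x ∈ F} 2) = (F.card + 1).choose 2 := by
    rw [Sym.card_sym_eq_choose, Fintype.card_coe]; congr 1
  have hinj3 : Function.Injective (symSum F 3) := by
    have : (Finset.univ.image (symSum F 3)).card = (Finset.univ : Finset (Sym {x // x ∈ F} 3)).card := by
      rw [h3, Finset.card_univ, hc3]
    have h := Finset.card_image_iff.mp this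
    intro u v huv
    exact h (Finset.mem_coe.mpr (Finset.mem_univ u)) (Finset.mem_coe.mpr (Finset.mem_univ v)) huv
  have hinj2 : Function.Injective (symSum F 2) := by
    intro u v huv
    have : symSum F 3 ((⟨0, h0⟩ : {x // x ∈ F}) ::ₛ u) = symSum F 3 ((⟨0, h0⟩ : {x // x ∈ F}) ::ₛ v) := by
      rw [symSum_cons, symSum_cons, huv]
    exact (Sym.cons_inj_right _ u v).mp (hinj3 this)
  rw [Finset.card_image_of_injective _ hinj2, Finset.card_univ, hc2]

/- ## The explicit description of the semigroup -/

def Tset (m a : ℕ) (B : Set ℕ) : Set ℕ :=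
  {x | x = 0 ∨ x = m ∨ x = 2*m ∨ x = 3*m ∨ (∃ u ∈ B, x = a + u) ∨ (∃ u ∈ B, x = m + (a + u)) ∨
    (∃ u ∈ B, x = 2*m + (a + u)) ∨ (∃ u ∈ B, ∃ v ∈ B, x = (a + u) + (a + v)) ∨ 4*m ≤ x}

def Lu (m a : ℕ) (B : Set ℕ) : Set ℕ :=
  {0} ∪ ({m} ∪ ({2*m} ∪ ({3*m} ∪ (((fun z => a + z) '' B) ∪ (((fun z => m + a + z) '' B) ∪
    (((fun z => 2*m + a + z) '' B) ∪ ((fun z => 2*a + z) '' (B + B))))))))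

def Du (m a : ℕ) (B : Set ℕ) : Set ℕ :=
  {4*m} ∪ (((fun z => 3*m + a + z) '' B) ∪ (((fun z => m + 2*a + z) '' (B + B)) ∪
    ((fun z => 3*a + z) '' (B + (B + B)))))

lemma disj_img_img {c1 c2 : ℕ} {W1 W2 : Set ℕ} (h : ∀ u ∈ W1, ∀ v ∈ W2, c1 + u ≠ c2 + v) :
    Disjoint ((fun z => c1 + z) '' W1) ((fun z => c2 + z) '' W2) := by
  rw [Set.disjoint_left]
  rintro x ⟨u, hu, rfl⟩ ⟨v, hv, h2⟩
  beta_reduce at h2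
  exact h u hu v hv h2.symm

lemma disj_sing_img {c c2 : ℕ} {W : Set ℕ} (h : ∀ v ∈ W, c ≠ c2 + v) :
    Disjoint ({c} : Set ℕ) ((fun z => c2 + z) '' W) := by
  rw [Set.disjoint_left]
  rintro x hx ⟨v, hv, h2⟩
  rw [Set.mem_singleton_iff] at hx
  subst hx
  beta_reduce at h2
  exact h v hv h2.symm

section TsetLemmas

variable {m k r a : ℕ} {B : Set ℕ}

lemma tc0 {x : ℕ} (h : x = 0) : x ∈ Tset m a B := Or.inl h
lemma tc1 {x : ℕ} (h : x = m) : x ∈ Tset m a B := Or.inr (Or.inl h)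
lemma tc2 {x : ℕ} (h : x = 2*m) : x ∈ Tset m a B := Or.inr (Or.inr (Or.inl h))
lemma tc3 {x : ℕ} (h : x = 3*m) : x ∈ Tset m a B := Or.inr (Or.inr (Or.inr (Or.inl h)))
lemma tcA {x u : ℕ} (hu : u ∈ B) (h : x = a + u) : x ∈ Tset m a B :=
  Or.inr (Or.inr (Or.inr (Or.inr (Or.inl ⟨u, hu, h⟩))))
lemma tcmA {x u : ℕ} (hu : u ∈ B) (h : x = m + (a + u)) : x ∈ Tset m a B :=
  Or.inr (Or.inr (Or.inr (Or.inr (Or.inr (Or.inl ⟨u, hu, h⟩)))))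
lemma tc2mA {x u : ℕ} (hu : u ∈ B) (h : x = 2*m + (a + u)) : x ∈ Tset m a B :=
  Or.inr (Or.inr (Or.inr (Or.inr (Or.inr (Or.inr (Or.inl ⟨u, hu, h⟩))))))
lemma tcAA {x u v : ℕ} (hu : u ∈ B) (hv : v ∈ B) (h : x = (a + u) + (a + v)) : x ∈ Tset m a B :=
  Or.inr (Or.inr (Or.inr (Or.inr (Or.inr (Or.inr (Or.inr (Or.inl ⟨u, hu, v, hv, h⟩)))))))
lemma tcT {x : ℕ} (h : 4*m ≤ x) : x ∈ Tset m a B :=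
  Or.inr (Or.inr (Or.inr (Or.inr (Or.inr (Or.inr (Or.inr (Or.inr h)))))))

lemma Tadd (hBr : ∀ x ∈ B, x ≤ r) (hk : r + 1 ≤ k) (hm : 3*k + 6*r + 2 ≤ m)
    (ha : 2*a = 3*m + k) :
    ∀ x ∈ Tset m a B, ∀ y ∈ Tset m a B, x + y ∈ Tset m a B := by
  intro x hx y hy
  rcases hx with rfl | rfl | rfl | rfl | ⟨u, hu, rfl⟩ | ⟨u, hu, rfl⟩ | ⟨u, hu, rfl⟩ | ⟨u, hu, v, hv, rfl⟩ | hx4 <;>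
    rcases hy with rfl | rfl | rfl | rfl | ⟨u', hu', rfl⟩ | ⟨u', hu', rfl⟩ | ⟨u', hu', rfl⟩ | ⟨u', hu', v', hv', rfl⟩ | hy4 <;>
    (try have hu2 := hBr _ hu) <;> (try have hv2 := hBr _ hv) <;>
    (try have hu2' := hBr _ hu') <;> (try have hv2' := hBr _ hv') <;>
    first
      | exact tcT (by omega)
      | exact tc0 (by omega)
      | exact tc1 (by omega)
      | exact tc2 (by omega)
      | exact tc3 (by omega)
      | exact tcA hu (by omega)
      | exact tcA hu' (by omega)
      | exact tcmA hu (by omega)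
      | exact tcmA hu' (by omega)
      | exact tc2mA hu (by omega)
      | exact tc2mA hu' (by omega)
      | exact tcAA hu hu' (by omega)
      | exact tcAA hu hv (by omega)
      | exact tcAA hu' hv' (by omega)

lemma genUpTo_eq (hBr : ∀ x ∈ B, x ≤ r) (hk : r + 1 ≤ k) (hm : 3*k + 6*r + 2 ≤ m)
    (ha : 2*a = 3*m + k) :
    NSgenUpTo ({m} ∪ (fun z => a + z) '' B) (4*m) = Tset m a B := by
  have hTM : ∃ TM : AddSubmonoid ℕ, (TM : Set ℕ) = Tset m a B :=
    ⟨{ carrier := Tset m a B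
       zero_mem' := tc0 rfl
       add_mem' := fun {x y} hx hy => Tadd hBr hk hm ha x hx y hy }, rfl⟩
  obtain ⟨TM, hTM⟩ := hTM
  apply Set.eq_of_subset_of_subset
  · apply Set.union_subset
    · rw [← hTM]
      intro x hx
      refine AddSubmonoid.closure_le.mpr ?_ hx
      rw [hTM]
      rintro z (rfl | ⟨u, hu, rfl⟩)
      · exact Or.inr (Or.inl rfl)
      · exact Or.inr (Or.inr (Or.inr (Or.inr (Or.inl ⟨u, hu, rfl⟩))))
    · intro x hx
      exact Or.inr (Or.inr (Or.inr (Or.inr (Or.inr (Or.inr (Or.inr (Or.inr hx)))))))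
  · have hmS : m ∈ AddSubmonoid.closure ({m} ∪ (fun z => a + z) '' B) :=
      AddSubmonoid.subset_closure (Or.inl rfl)
    have hAS : ∀ u ∈ B, a + u ∈ AddSubmonoid.closure ({m} ∪ (fun z => a + z) '' B) :=
      fun u hu => AddSubmonoid.subset_closure (Or.inr ⟨u, hu, rfl⟩)
    rintro x (rfl | rfl | rfl | rfl | ⟨u, hu, rfl⟩ | ⟨u, hu, rfl⟩ | ⟨u, hu, rfl⟩ | ⟨u, hu, v, hv, rfl⟩ | hx4)
    · exact Or.inl (AddSubmonoid.zero_mem _)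
    · exact Or.inl hmS
    · exact Or.inl (by rw [two_mul]; exact AddSubmonoid.add_mem _ hmS hmS)
    · exact Or.inl (by rw [show 3*m = m + (m + m) by ring]; exact AddSubmonoid.add_mem _ hmS (AddSubmonoid.add_mem _ hmS hmS))
    · exact Or.inl (hAS u hu)
    · exact Or.inl (AddSubmonoid.add_mem _ hmS (hAS u hu))
    · exact Or.inl (by rw [two_mul, add_assoc]; exact AddSubmonoid.add_mem _ hmS (AddSubmonoid.add_mem _ hmS (hAS u hu)))
    · exact Or.inl (AddSubmonoid.add_mem _ (hAS u hu) (hAS v hv))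
    · exact Or.inr hx4

lemma nonzero_ge (hBr : ∀ x ∈ B, x ≤ r) (hk : r + 1 ≤ k) (hm : 3*k + 6*r + 2 ≤ m)
    (ha : 2*a = 3*m + k) {x : ℕ} (hx : x ∈ Tset m a B) (hx0 : x ≠ 0) : m ≤ x := by
  rcases hx with rfl | rfl | rfl | rfl | ⟨u, hu, rfl⟩ | ⟨u, hu, rfl⟩ | ⟨u, hu, rfl⟩ | ⟨u, hu, v, hv, rfl⟩ | hx4 <;>
    omega

lemma mult_eq (hBr : ∀ x ∈ B, x ≤ r) (hk : r + 1 ≤ k) (hm : 3*k + 6*r + 2 ≤ m)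
    (ha : 2*a = 3*m + k) : NSmult (Tset m a B) = m := by
  have hmem : m ∈ Tset m a B \ {0} := ⟨Or.inr (Or.inl rfl), by simp; omega⟩
  apply le_antisymm
  · exact Nat.sInf_le hmem
  · apply le_csInf ⟨m, hmem⟩
    rintro b ⟨hb, hb0⟩
    exact nonzero_ge hBr hk hm ha hb (by simpa using hb0)

lemma cond_eq (hBr : ∀ x ∈ B, x ≤ r) (hk : r + 1 ≤ k) (hm : 3*k + 6*r + 2 ≤ m)
    (ha : 2*a = 3*m + k) : NSconductor (Tset m a B) = 4*m := by
  have hnot : (4*m - 1) ∉ Tset m a B := by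
    rintro (h | h | h | h | ⟨u, hu, h⟩ | ⟨u, hu, h⟩ | ⟨u, hu, h⟩ | ⟨u, hu, v, hv, h⟩ | h) <;>
      [skip; skip; skip; skip;
       (have := hBr _ hu); (have := hBr _ hu); (have := hBr _ hu);
       (have h1 := hBr _ hu; have h2 := hBr _ hv); skip] <;> omega
  have hmem : 4*m ∈ {n | ∀ j, n ≤ j → j ∈ Tset m a B} := by
    intro j hj
    exact Or.inr (Or.inr (Or.inr (Or.inr (Or.inr (Or.inr (Or.inr (Or.inr hj)))))))
  apply le_antisymm
  · exact Nat.sInf_le hmem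
  · apply le_csInf ⟨4*m, hmem⟩
    intro b hb
    by_contra hlt
    push_neg at hlt
    exact hnot (hb (4*m - 1) (by omega))

lemma qnum_eq (hBr : ∀ x ∈ B, x ≤ r) (hk : r + 1 ≤ k) (hm : 3*k + 6*r + 2 ≤ m)
    (ha : 2*a = 3*m + k) : NSqnum (Tset m a B) = 4 := by
  rw [NSqnum, cond_eq hBr hk hm ha, mult_eq hBr hk hm ha]
  exact Nat.div_eq_of_lt_le (by omega) (by omega)

lemma rho_eq (hBr : ∀ x ∈ B, x ≤ r) (hk : r + 1 ≤ k) (hm : 3*k + 6*r + 2 ≤ m)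
    (ha : 2*a = 3*m + k) : NSrho (Tset m a B) = 0 := by
  rw [NSrho, qnum_eq hBr hk hm ha, cond_eq hBr hk hm ha, mult_eq hBr hk hm ha]
  omega

lemma Lset_eq (hBr : ∀ x ∈ B, x ≤ r) (hk : r + 1 ≤ k) (hm : 3*k + 6*r + 2 ≤ m)
    (ha : 2*a = 3*m + k) : NSLset (Tset m a B) = Lu m a B := by
  ext x
  rw [NSLset, cond_eq hBr hk hm ha]
  simp only [Set.mem_inter_iff, Set.mem_Iio]
  constructor
  · rintro ⟨hx, hlt⟩
    rcases hx with rfl | rfl | rfl | rfl | ⟨u, hu, rfl⟩ | ⟨u, hu, rfl⟩ | ⟨u, hu, rfl⟩ | ⟨u, hu, v, hv, rfl⟩ | hx4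
    · exact Or.inl rfl
    · exact Or.inr (Or.inl rfl)
    · exact Or.inr (Or.inr (Or.inl rfl))
    · exact Or.inr (Or.inr (Or.inr (Or.inl rfl)))
    · exact Or.inr (Or.inr (Or.inr (Or.inr (Or.inl ⟨u, hu, rfl⟩))))
    · exact Or.inr (Or.inr (Or.inr (Or.inr (Or.inr (Or.inl ⟨u, hu, by beta_reduce; omega⟩)))))
    · exact Or.inr (Or.inr (Or.inr (Or.inr (Or.inr (Or.inr (Or.inl ⟨u, hu, by beta_reduce; omega⟩))))))
    · exact Or.inr (Or.inr (Or.inr (Or.inr (Or.inr (Or.inr (Or.inr ⟨u+v, Set.add_mem_add hu hv, by beta_reduce; omega⟩))))))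
    · omega
  · rintro (rfl | rfl | rfl | rfl | ⟨u, hu, rfl⟩ | ⟨u, hu, rfl⟩ | ⟨u, hu, rfl⟩ | ⟨z, hz, rfl⟩)
    · exact ⟨tc0 rfl, by omega⟩
    · exact ⟨tc1 rfl, by omega⟩
    · exact ⟨tc2 rfl, by omega⟩
    · exact ⟨tc3 rfl, by omega⟩
    · have := hBr _ hu
      exact ⟨tcA hu rfl, by beta_reduce; omega⟩
    · have := hBr _ hu
      exact ⟨tcmA hu (by beta_reduce; omega), by beta_reduce; omega⟩
    · have := hBr _ hu
      exact ⟨tc2mA hu (by beta_reduce; omega), by beta_reduce; omega⟩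
    · rcases Set.mem_add.mp hz with ⟨u, hu, v, hv, rfl⟩
      have := hBr _ hu
      have := hBr _ hv
      exact ⟨tcAA hu hv (by beta_reduce; omega), by beta_reduce; omega⟩

lemma prims_inter_eq (hBr : ∀ x ∈ B, x ≤ r) (hk : r + 1 ≤ k) (hm : 3*k + 6*r + 2 ≤ m)
    (ha : 2*a = 3*m + k) :
    NSprims (Tset m a B) ∩ NSLset (Tset m a B) = {m} ∪ (fun z => a + z) '' B := by
  ext x
  rw [Lset_eq hBr hk hm ha]
  constructor
  · rintro ⟨⟨hxS, hx0, hnd⟩, hL⟩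
    rcases hL with rfl | rfl | rfl | rfl | ⟨u, hu, rfl⟩ | ⟨u, hu, rfl⟩ | ⟨u, hu, rfl⟩ | ⟨z, hz, rfl⟩
    · omega
    · exact Or.inl rfl
    · exact absurd ⟨m, tc1 rfl, by omega, m, tc1 rfl, by omega, by omega⟩ hnd
    · exact absurd ⟨m, tc1 rfl, by omega, 2*m, tc2 rfl, by omega, by omega⟩ hnd
    · exact Or.inr ⟨u, hu, rfl⟩
    · exact absurd ⟨m, tc1 rfl, by omega, a + u, tcA hu rfl, by beta_reduce; omega, by beta_reduce; omega⟩ hnd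
    · exact absurd ⟨m, tc1 rfl, by omega, m + (a + u), tcmA hu rfl, by beta_reduce; omega, by beta_reduce; omega⟩ hnd
    · rcases Set.mem_add.mp hz with ⟨u, hu, v, hv, rfl⟩
      exact absurd ⟨a + u, tcA hu rfl, by beta_reduce; omega, a + v, tcA hv rfl, by beta_reduce; omega, by beta_reduce; omega⟩ hnd
  · have hprim : ∀ w : ℕ, w ∈ Tset m a B → w ≠ 0 → w ≤ 2*m - 1 →
        ¬ ∃ x, x ∈ Tset m a B ∧ x ≠ 0 ∧ ∃ y, y ∈ Tset m a B ∧ y ≠ 0 ∧ w = x + y := by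
      rintro w _ _ hw ⟨x, hx, hx0, y, hy, hy0, rfl⟩
      have h1 := nonzero_ge hBr hk hm ha hx hx0
      have h2 := nonzero_ge hBr hk hm ha hy hy0
      omega
    rintro (hxm | ⟨u, hu, rfl⟩)
    · rw [Set.mem_singleton_iff] at hxm
      rw [hxm]
      exact ⟨⟨tc1 rfl, by omega, hprim m (tc1 rfl) (by omega) (by omega)⟩, Or.inr (Or.inl rfl)⟩
    · have := hBr _ hu
      exact ⟨⟨tcA hu rfl, by beta_reduce; omega,
        hprim (a+u) (tcA hu rfl) (by omega) (by omega)⟩,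
        Or.inr (Or.inr (Or.inr (Or.inr (Or.inl ⟨u, hu, rfl⟩))))⟩

lemma dd1 {x : ℕ} (h : x = 4*m) : x ∈ Du m a B := Or.inl h
lemma dd2 {x u : ℕ} (hu : u ∈ B) (h : x = 3*m + a + u) : x ∈ Du m a B :=
  Or.inr (Or.inl ⟨u, hu, h.symm⟩)
lemma dd3 {x u v : ℕ} (hu : u ∈ B) (hv : v ∈ B) (h : x = m + 2*a + (u + v)) : x ∈ Du m a B :=
  Or.inr (Or.inr (Or.inl ⟨u + v, Set.add_mem_add hu hv, h.symm⟩))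
lemma dd4 {x u v w : ℕ} (hu : u ∈ B) (hv : v ∈ B) (hw : w ∈ B)
    (h : x = 3*a + (u + (v + w))) : x ∈ Du m a B :=
  Or.inr (Or.inr (Or.inr ⟨u + (v + w), Set.add_mem_add hu (Set.add_mem_add hv hw), h.symm⟩))

lemma Dq_eq (hBr : ∀ x ∈ B, x ≤ r) (hk : r + 1 ≤ k) (hm : 3*k + 6*r + 2 ≤ m)
    (ha : 2*a = 3*m + k) : NSDq (Tset m a B) = Du m a B := by
  ext s
  rw [NSDq, cond_eq hBr hk hm ha, mult_eq hBr hk hm ha]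
  simp only [Set.mem_diff, Set.mem_Icc]
  constructor
  · rintro ⟨⟨hlb, hub⟩, hP⟩
    have hsS : s ∈ Tset m a B := tcT hlb
    have hs0 : s ≠ 0 := by omega
    have hd : ∃ x, x ∈ Tset m a B ∧ x ≠ 0 ∧ ∃ y, y ∈ Tset m a B ∧ y ≠ 0 ∧ s = x + y := by
      by_contra hnd
      exact hP ⟨hsS, hs0, hnd⟩
    obtain ⟨x, hx, hx0, y, hy, hy0, rfl⟩ := hd
    rcases hx with rfl | rfl | rfl | rfl | ⟨u, hu, rfl⟩ | ⟨u, hu, rfl⟩ | ⟨u, hu, rfl⟩ | ⟨u, hu, v, hv, rfl⟩ | hx4 <;>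
      rcases hy with rfl | rfl | rfl | rfl | ⟨u', hu', rfl⟩ | ⟨u', hu', rfl⟩ | ⟨u', hu', rfl⟩ | ⟨u', hu', v', hv', rfl⟩ | hy4 <;>
      (try have hu2 := hBr _ hu) <;> (try have hv2 := hBr _ hv) <;>
      (try have hu2' := hBr _ hu') <;> (try have hv2' := hBr _ hv') <;>
      first
        | exact dd1 (by omega)
        | exact dd2 hu (by omega)
        | exact dd2 hu' (by omega)
        | exact dd3 hu hu' (by omega)
        | exact dd3 hu hv (by omega)
        | exact dd3 hu' hv' (by omega)
        | exact dd4 hu hu' hv' (by omega)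
        | exact dd4 hu hv hu' (by omega)
        | (exfalso; omega)
  · intro hD
    have hkey : (4*m ≤ s ∧ s ≤ 4*m + m - 1) ∧
        ∃ x, x ∈ Tset m a B ∧ x ≠ 0 ∧ ∃ y, y ∈ Tset m a B ∧ y ≠ 0 ∧ s = x + y := by
      rcases hD with hs4 | ⟨u, hu, rfl⟩ | ⟨z, hz, rfl⟩ | ⟨z, hz, rfl⟩
      · rw [Set.mem_singleton_iff] at hs4
        exact ⟨⟨by omega, by omega⟩, m, tc1 rfl, by omega, 3*m, tc3 rfl, by omega, by omega⟩
      · have := hBr _ hu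
        exact ⟨⟨by beta_reduce; omega, by beta_reduce; omega⟩,
          m, tc1 rfl, by omega, 2*m + (a + u), tc2mA hu rfl, by omega, by beta_reduce; omega⟩
      · rcases Set.mem_add.mp hz with ⟨u, hu, v, hv, rfl⟩
        have := hBr _ hu
        have := hBr _ hv
        exact ⟨⟨by beta_reduce; omega, by beta_reduce; omega⟩,
          m, tc1 rfl, by omega, (a + u) + (a + v), tcAA hu hv rfl, by omega, by beta_reduce; omega⟩
      · rcases Set.mem_add.mp hz with ⟨u, hu, z', hz', rfl⟩
        rcases Set.mem_add.mp hz' with ⟨v, hv, w, hw, rfl⟩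
        have := hBr _ hu
        have := hBr _ hv
        have := hBr _ hw
        exact ⟨⟨by beta_reduce; omega, by beta_reduce; omega⟩,
          a + u, tcA hu rfl, by omega, (a + v) + (a + w), tcAA hv hw rfl, by omega, by beta_reduce; omega⟩
    obtain ⟨⟨h1, h2⟩, x, hx, hx0, y, hy, hy0, heq⟩ := hkey
    exact ⟨⟨h1, h2⟩, fun hP => hP.2.2 ⟨x, hx, hx0, y, hy, hy0, heq⟩⟩

lemma memB2 (hBr : ∀ x ∈ B, x ≤ r) : ∀ z ∈ B + B, z ≤ 2*r := by
  intro z hz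
  rcases Set.mem_add.mp hz with ⟨u, hu, v, hv, rfl⟩
  have := hBr _ hu; have := hBr _ hv; omega

lemma memB3 (hBr : ∀ x ∈ B, x ≤ r) : ∀ z ∈ B + (B + B), z ≤ 3*r := by
  intro z hz
  rcases Set.mem_add.mp hz with ⟨u, hu, w, hw, rfl⟩
  have := hBr _ hu; have := memB2 hBr _ hw; omega

lemma ncard_Lu (hfB : B.Finite) (hBr : ∀ x ∈ B, x ≤ r) (hk : r + 1 ≤ k)
    (hm : 3*k + 6*r + 2 ≤ m) (ha : 2*a = 3*m + k) :
    (Lu m a B).ncard = 4 + 3 * B.ncard + (B + B).ncard := by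
  have hB2 := memB2 (B := B) hBr
  have hB3 := memB3 (B := B) hBr
  have fBB : (B + B).Finite := hfB.add hfB
  have fA : ((fun z => a + z) '' B).Finite := hfB.image _
  have fmA : ((fun z => m + a + z) '' B).Finite := hfB.image _
  have f2mA : ((fun z => 2*m + a + z) '' B).Finite := hfB.image _
  have fAA : ((fun z => 2*a + z) '' (B + B)).Finite := fBB.image _
  have d45 : Disjoint ((fun z => a + z) '' B) ((fun z => m + a + z) '' B) :=
    disj_img_img (fun u hu v hv => by have := hBr _ hu; have := hBr _ hv; omega)
  have d46 : Disjoint ((fun z => a + z) '' B) ((fun z => 2*m + a + z) '' B) :=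
    disj_img_img (fun u hu v hv => by have := hBr _ hu; have := hBr _ hv; omega)
  have d47 : Disjoint ((fun z => a + z) '' B) ((fun z => 2*a + z) '' (B + B)) :=
    disj_img_img (fun u hu v hv => by have := hBr _ hu; have := hB2 _ hv; omega)
  have d56 : Disjoint ((fun z => m + a + z) '' B) ((fun z => 2*m + a + z) '' B) :=
    disj_img_img (fun u hu v hv => by have := hBr _ hu; have := hBr _ hv; omega)
  have d57 : Disjoint ((fun z => m + a + z) '' B) ((fun z => 2*a + z) '' (B + B)) :=
    disj_img_img (fun u hu v hv => by have := hBr _ hu; have := hB2 _ hv; omega)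
  have d67 : Disjoint ((fun z => 2*m + a + z) '' B) ((fun z => 2*a + z) '' (B + B)) :=
    disj_img_img (fun u hu v hv => by have := hBr _ hu; have := hB2 _ hv; omega)
  have s04 : ∀ c : ℕ, c = 0 ∨ c = m ∨ c = 2*m ∨ c = 3*m →
      Disjoint ({c} : Set ℕ) ((fun z => a + z) '' B) ∧
      Disjoint ({c} : Set ℕ) ((fun z => m + a + z) '' B) ∧
      Disjoint ({c} : Set ℕ) ((fun z => 2*m + a + z) '' B) ∧
      Disjoint ({c} : Set ℕ) ((fun z => 2*a + z) '' (B + B)) := by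
    intro c hc
    refine ⟨disj_sing_img (fun v hv => by have := hBr _ hv; omega),
      disj_sing_img (fun v hv => by have := hBr _ hv; omega),
      disj_sing_img (fun v hv => by have := hBr _ hv; omega),
      disj_sing_img (fun v hv => by have := hB2 _ hv; omega)⟩
  obtain ⟨e04, e05, e06, e07⟩ := s04 0 (by omega)
  obtain ⟨e14, e15, e16, e17⟩ := s04 m (by omega)
  obtain ⟨e24, e25, e26, e27⟩ := s04 (2*m) (by omega)
  obtain ⟨e34, e35, e36, e37⟩ := s04 (3*m) (by omega)
  have hsd : ∀ c c' : ℕ, c ≠ c' → Disjoint ({c} : Set ℕ) ({c'} : Set ℕ) := by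
    intro c c' h
    exact Set.disjoint_singleton.mpr h
  rw [Lu]
  rw [Set.ncard_union_eq (by
        simp only [Set.disjoint_union_right]
        exact ⟨hsd _ _ (by omega), hsd _ _ (by omega), hsd _ _ (by omega), e04, e05, e06, e07⟩)
      (Set.finite_singleton _)
      (((Set.finite_singleton _).union ((Set.finite_singleton _).union ((Set.finite_singleton _).union (fA.union (fmA.union (f2mA.union fAA)))))))]
  rw [Set.ncard_union_eq (by
        simp only [Set.disjoint_union_right]
        exact ⟨hsd _ _ (by omega), hsd _ _ (by omega), e14, e15, e16, e17⟩)
      (Set.finite_singleton _)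
      ((Set.finite_singleton _).union ((Set.finite_singleton _).union (fA.union (fmA.union (f2mA.union fAA)))))]
  rw [Set.ncard_union_eq (by
        simp only [Set.disjoint_union_right]
        exact ⟨hsd _ _ (by omega), e24, e25, e26, e27⟩)
      (Set.finite_singleton _)
      ((Set.finite_singleton _).union (fA.union (fmA.union (f2mA.union fAA))))]
  rw [Set.ncard_union_eq (by
        simp only [Set.disjoint_union_right]
        exact ⟨e34, e35, e36, e37⟩)
      (Set.finite_singleton _)
      (fA.union (fmA.union (f2mA.union fAA)))]
  rw [Set.ncard_union_eq (by
        simp only [Set.disjoint_union_right]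
        exact ⟨d45, d46, d47⟩) fA (fmA.union (f2mA.union fAA))]
  rw [Set.ncard_union_eq (by
        simp only [Set.disjoint_union_right]
        exact ⟨d56, d57⟩) fmA (f2mA.union fAA)]
  rw [Set.ncard_union_eq d67 f2mA fAA]
  rw [Set.ncard_image_of_injective B (add_right_injective a),
    Set.ncard_image_of_injective B (add_right_injective (m+a)),
    Set.ncard_image_of_injective B (add_right_injective (2*m+a)),
    Set.ncard_image_of_injective (B+B) (add_right_injective (2*a))]
  simp [Set.ncard_singleton]
  omega

lemma ncard_PL (hfB : B.Finite) (hBr : ∀ x ∈ B, x ≤ r) (hk : r + 1 ≤ k)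
    (hm : 3*k + 6*r + 2 ≤ m) (ha : 2*a = 3*m + k) :
    (({m} : Set ℕ) ∪ (fun z => a + z) '' B).ncard = 1 + B.ncard := by
  rw [Set.ncard_union_eq
      (disj_sing_img (fun v hv => by have := hBr _ hv; omega))
      (Set.finite_singleton _) (hfB.image _),
    Set.ncard_image_of_injective B (add_right_injective a), Set.ncard_singleton]

lemma ncard_Du (hfB : B.Finite) (hBr : ∀ x ∈ B, x ≤ r) (hk : r + 1 ≤ k)
    (hm : 3*k + 6*r + 2 ≤ m) (ha : 2*a = 3*m + k) :
    (Du m a B).ncard = 1 + B.ncard + (B + B).ncard + (B + (B + B)).ncard := by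
  have hB2 := memB2 (B := B) hBr
  have hB3 := memB3 (B := B) hBr
  have fBB : (B + B).Finite := hfB.add hfB
  have fBBB : (B + (B + B)).Finite := hfB.add fBB
  have f1 : ((fun z => 3*m + a + z) '' B).Finite := hfB.image _
  have f2 : ((fun z => m + 2*a + z) '' (B + B)).Finite := fBB.image _
  have f3 : ((fun z => 3*a + z) '' (B + (B + B))).Finite := fBBB.image _
  have d12 : Disjoint ((fun z => 3*m + a + z) '' B) ((fun z => m + 2*a + z) '' (B + B)) :=
    disj_img_img (fun u hu v hv => by
      have := hBr _ hu
      rcases Set.mem_add.mp hv with ⟨p, hp, q, hq, rfl⟩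
      have := hBr _ hp; have := hBr _ hq; omega)
  have d13 : Disjoint ((fun z => 3*m + a + z) '' B) ((fun z => 3*a + z) '' (B + (B + B))) :=
    disj_img_img (fun u hu v hv => by have := hBr _ hu; have := hB3 _ hv; omega)
  have d23 : Disjoint ((fun z => m + 2*a + z) '' (B + B)) ((fun z => 3*a + z) '' (B + (B + B))) :=
    disj_img_img (fun u hu v hv => by have := hB2 _ hu; have := hB3 _ hv; omega)
  rw [Du]
  rw [Set.ncard_union_eq (by
        simp only [Set.disjoint_union_right]
        exact ⟨disj_sing_img (fun v hv => by have := hBr _ hv; omega),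
          disj_sing_img (fun v hv => by have := hB2 _ hv; omega),
          disj_sing_img (fun v hv => by have := hB3 _ hv; omega)⟩)
      (Set.finite_singleton _) (f1.union (f2.union f3))]
  rw [Set.ncard_union_eq (by
        simp only [Set.disjoint_union_right]
        exact ⟨d12, d13⟩) f1 (f2.union f3)]
  rw [Set.ncard_union_eq d23 f2 f3]
  rw [Set.ncard_image_of_injective B (add_right_injective (3*m+a)),
    Set.ncard_image_of_injective (B+B) (add_right_injective (m+2*a)),
    Set.ncard_image_of_injective (B+(B+B)) (add_right_injective (3*a)), Set.ncard_singleton]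
  omega

end TsetLemmas


theorem stmt17 (n : ℕ) (hn : 3 ≤ n) (A' : Set ℕ) (hfin : A'.Finite)
    (h0 : 0 ∈ A') (hcard : A'.ncard = n - 1) (hB3 : IsBh 3 A')
    (r : ℕ) (hr : IsGreatest A' r) (k m a : ℕ) (hk : r + 1 ≤ k)
    (hm : 3 * k + 6 * r + 2 ≤ m) (hpar : m % 2 = k % 2)
    (hadef : 2 * a = 3 * m + k) :
    NSW0num (NSgenUpTo ({m} ∪ (fun x => a + x) '' A') (4 * m)) = -(n.choose 3 : ℤ) := by
  have hBr : ∀ x ∈ A', x ≤ r := fun x hx => hr.2 hx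
  rw [genUpTo_eq hBr hk hm hadef]
  simp only [NSW0num]
  rw [prims_inter_eq hBr hk hm hadef, Lset_eq hBr hk hm hadef, Dq_eq hBr hk hm hadef,
    qnum_eq hBr hk hm hadef, rho_eq hBr hk hm hadef,
    ncard_PL hfin hBr hk hm hadef, ncard_Lu hfin hBr hk hm hadef, ncard_Du hfin hBr hk hm hadef]
  -- sumset cardinalities from the B₃ hypothesis
  have hfold2 : hfold 2 A' = A' + A' := by
    show A' + (A' + ({0} : Set ℕ)) = A' + A'
    rw [show ({0} : Set ℕ) = (0 : Set ℕ) from rfl, add_zero]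
  have hfold3 : hfold 3 A' = A' + (A' + A') := by
    show A' + (A' + (A' + ({0} : Set ℕ))) = A' + (A' + A')
    rw [show ({0} : Set ℕ) = (0 : Set ℕ) from rfl, add_zero]
  have hcoe : (↑hfin.toFinset : Set ℕ) = A' := hfin.coe_toFinset
  have hFcard : hfin.toFinset.card = n - 1 := by
    rw [← hcard, Set.ncard_eq_toFinset_card A' hfin]
  have hB3' : IsBh 3 A' := hB3
  rw [IsBh] at hB3'
  have h3' : (hfold 3 (↑hfin.toFinset : Set ℕ)).ncard = (hfin.toFinset.card + 2).choose 3 := by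
    rw [hcoe, hB3', hcard, hFcard]
    congr 1
  have h2' := card_B2_of_B3 hfin.toFinset (hfin.mem_toFinset.mpr h0) h3'
  rw [hcoe, hfold2] at h2'
  have hc2 : (A' + A').ncard = n.choose 2 := by
    rw [h2', hFcard]
    congr 1
    omega
  have hc3 : (A' + (A' + A')).ncard = (n+1).choose 3 := by
    rw [← hfold3, hB3', hcard]
    congr 1
    omega
  rw [hcard, hc2, hc3]
  -- final arithmetic
  obtain ⟨p, rfl⟩ : ∃ p, n = p + 3 := ⟨n - 3, by omega⟩
  rw [show p + 3 - 1 = p + 2 from rfl,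
    show (p + 3 + 1).choose 3 = (p+3).choose 2 + (p+3).choose 3 from Nat.choose_succ_succ' (p+3) 2]
  have h2c : (2 : ℤ) * ((p+3).choose 2 : ℤ) = (↑p+3) * (↑p+2) := by
    exact_mod_cast congrArg (Nat.cast : ℕ → ℤ) (ch2' (p+2))
  have h3c : (3 : ℤ) * ((p+3).choose 3 : ℤ) = (↑p+1) * ((p+3).choose 2 : ℤ) := by
    exact_mod_cast congrArg (Nat.cast : ℕ → ℤ) (ch3' (p+1))
  push_cast
  linear_combination (-3 : ℤ) * h2c - h3c
end

section
/- Let m, a, b, n, A, S be as follows: n ≥ 3, (3m+1)/2 ≤ a < b ≤ (5m-1)/3, A ⊆ ℕ with |A| = n-1, min A = a, max A = b, the image of A in ℤ/mℤ a B₃ set of cardinality n-1, and S = ⟨{m} ∪ A⟩ ∪ [4m, ∞). Then the integer interval J = 4m + [⌊(m+1)/3⌋, ⌈(m-1)/2⌉] consists entirely of primitive elements of S, and consequently |P ∩ [4m, 5m-1]| ≥ m/6. -/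
open Set Pointwise

namespace AddSubmonoid

variable {T : Set ℕ}

lemma le_of_mem_closure_of_forall_le {d x : ℕ} (hT : ∀ y ∈ T, d ≤ y) (hx : x ∈ closure T)
    (hx0 : x ≠ 0) : d ≤ x := by
  suffices x = 0 ∨ d ≤ x from this.resolve_left hx0
  induction hx using closure_induction with
  | mem y hy => exact Or.inr (hT y hy)
  | zero => exact Or.inl rfl
  | add y z _ _ hy hz => omega

lemma exists_mul_add_le_of_mem_closure {m a b x : ℕ} {A : Set ℕ} (hA : A ⊆ Icc a b)
    (hx : x ∈ closure ({m} ∪ A)) :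
    ∃ k l : ℕ, k * m + l * a ≤ x ∧ x ≤ k * m + l * b := by
  induction hx using closure_induction with
  | mem y hy =>
    rcases hy with rfl | hy
    · exact ⟨1, 0, by simp, by simp⟩
    · exact ⟨0, 1, by simpa using (hA hy).1, by simpa using (hA hy).2⟩
  | zero => exact ⟨0, 0, by simp, by simp⟩
  | add y z _ _ hy hz =>
    obtain ⟨k₁, l₁, hy₁, hy₂⟩ := hy
    obtain ⟨k₂, l₂, hz₁, hz₂⟩ := hz
    exact ⟨k₁ + k₂, l₁ + l₂, by nlinarith, by nlinarith⟩

end AddSubmonoid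

/-- Below `t + d`, where `d` bounds the nonzero elements of `⟨T⟩` from below, a sum of two
nonzero elements of `⟨T⟩_t` can only come from `⟨T⟩` itself. -/
lemma mem_NSprims_NSgenUpTo {T : Set ℕ} {t d s : ℕ}
    (hd : ∀ x ∈ AddSubmonoid.closure T, x ≠ 0 → d ≤ x) (hdt : d ≤ t) (hts : t ≤ s)
    (hst : s < t + d) (hsT : s ∉ AddSubmonoid.closure T) : s ∈ NSprims (NSgenUpTo T t) := by
  refine ⟨Or.inr hts, by omega, ?_⟩
  rintro ⟨x, hx | hx, hx0, y, hy | hy, hy0, rfl⟩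
  · exact hsT (add_mem hx hy)
  · have := hd x hx hx0
    simp only [mem_ofPred_eq] at hy
    omega
  · have := hd y hy hy0
    simp only [mem_ofPred_eq] at hx
    omega
  · simp only [mem_ofPred_eq] at hx hy
    omega

/-- With `3m/2 < a ≤ b < 5m/3`, the sums `l a, …, l b` for `l = 0, 1, 2` lie in
`[0, 0]`, `(3m/2, 5m/3)` and `(3m, 10m/3)`, and `l ≥ 3` overshoots; shifted by multiples of `m`,
none of these reaches `[4m + ⌊(m+1)/3⌋, 4m + ⌊m/2⌋]`. -/
lemma not_mul_add_mem_Icc {m a b k l s : ℕ} (ha : 3 * m + 1 ≤ 2 * a) (hb : 3 * b ≤ 5 * m - 1)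
    (hab : a ≤ b) (hs : s ∈ Icc (4 * m + (m + 1) / 3) (4 * m + m / 2)) :
    ¬ (k * m + l * a ≤ s ∧ s ≤ k * m + l * b) := by
  rintro ⟨h₁, h₂⟩
  obtain ⟨hs₁, hs₂⟩ := hs
  rcases Nat.lt_or_ge l 3 with hl | hl
  · rcases Nat.lt_or_ge k 5 with hk | hk
    · interval_cases l <;> interval_cases k <;> omega
    · have : 5 * m ≤ k * m := Nat.mul_le_mul_right m hk
      omega
  · have : 3 * a ≤ l * a := Nat.mul_le_mul_right a hl
    omega

theorem stmt18_general (m a b : ℕ)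
    (ha : 3 * m + 1 ≤ 2 * a) (hb : 3 * b ≤ 5 * m - 1)
    (A : Set ℕ) (hmin : IsLeast A a) (hmax : IsGreatest A b) :
    Set.Icc (4 * m + (m + 1) / 3) (4 * m + m / 2) ⊆ NSprims (NSgenUpTo ({m} ∪ A) (4 * m)) ∧
      m ≤ 6 * (NSprims (NSgenUpTo ({m} ∪ A) (4 * m)) ∩ Set.Icc (4 * m) (5 * m - 1)).ncard := by
  have hab : a ≤ b := hmax.2 hmin.1
  have hA : A ⊆ Icc a b := fun x hx => ⟨hmin.2 hx, hmax.2 hx⟩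
  have hm : ∀ x ∈ AddSubmonoid.closure ({m} ∪ A), x ≠ 0 → m ≤ x :=
    fun x => AddSubmonoid.le_of_mem_closure_of_forall_le fun y hy =>
      hy.elim (fun h => h.ge) fun hy => by have := (hA hy).1; omega
  have hJ : Icc (4 * m + (m + 1) / 3) (4 * m + m / 2) ⊆ NSprims (NSgenUpTo ({m} ∪ A) (4 * m)) :=
    fun s hs => mem_NSprims_NSgenUpTo hm (by omega) (by have := hs.1; omega)
      (by have := hs.2; omega) fun hsA => by
        obtain ⟨k, l, hkl⟩ := AddSubmonoid.exists_mul_add_le_of_mem_closure hA hsA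
        exact not_mul_add_mem_Icc ha hb hab hs hkl
  refine ⟨hJ, ?_⟩
  calc m ≤ 6 * (Icc (4 * m + (m + 1) / 3) (4 * m + m / 2)).ncard := by
        rw [ncard_Icc_nat]; omega
    _ ≤ 6 * (NSprims (NSgenUpTo ({m} ∪ A) (4 * m)) ∩ Icc (4 * m) (5 * m - 1)).ncard := by
        gcongr
        · exact (finite_Icc _ _).inter_of_right _
        · exact subset_inter hJ (Icc_subset_Icc (by omega) (by omega))

theorem stmt18 (m a b n : ℕ) (hn : 3 ≤ n) (hm : 0 < m)
    (ha : 3 * m + 1 ≤ 2 * a) (hab : a < b) (hb : 3 * b ≤ 5 * m - 1)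
    (A : Set ℕ) (hfin : A.Finite) (hcard : A.ncard = n - 1)
    (hmin : IsLeast A a) (hmax : IsGreatest A b)
    (himg : ((fun x : ℕ => (x : ZMod m)) '' A).ncard = n - 1)
    (hB3 : IsBh 3 ((fun x : ℕ => (x : ZMod m)) '' A)) :
    Set.Icc (4 * m + (m + 1) / 3) (4 * m + m / 2) ⊆ NSprims (NSgenUpTo ({m} ∪ A) (4 * m)) ∧
      m ≤ 6 * (NSprims (NSgenUpTo ({m} ∪ A) (4 * m)) ∩ Set.Icc (4 * m) (5 * m - 1)).ncard :=
  stmt18_general m a b ha hb A hmin hmax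
end

section
/- Let m, a, b, n, A be as follows: n ≥ 3, (3m+1)/2 ≤ a < b ≤ (5m-1)/3, A ⊆ ℕ with |A| = n-1, min A = a, max A = b, and the image of A in ℤ/mℤ a B₃ set of cardinality n-1. Let S = ⟨{m} ∪ A⟩ ∪ [4m, ∞). Then W(S) ≥ 9; in particular S satisfies Wilf's conjecture. -/
open Set Pointwise

/-!
Every element of `S = ⟨{m} ∪ A⟩ ∪ [4m, ∞)` lies in `[4m, ∞)` or in a cell `i m + jA`. Since
`A ⊆ [a, b] ⊆ (3m/2, 5m/3)`, the cells meeting `[0, 4m)` are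
`{0}, {m}, {2m}, {3m}, A, m + A, 2m + A, 2A`; they are pairwise disjoint and lie in `[0, 4m - 2]`,
so the conductor is `4m` and `|L| = 4 + 3|A| + |2A|`. A sum of two nonzero elements that lands in
`[4m, 5m)` lies in one of the cells `4m, 3m + A, m + 2A, 3A`, so every other element of `[4m, 5m)`
is primitive, as are `m` and `A`. Bounding `|2A|` and `|(3m + A) ∪ 3A|` by the lengths of the
intervals `[2a, 2b]` and `[3m + a, 3b]` containing them leaves an integer inequality for
`|P||L| - 4m`.
-/

section Sumset
variable {M : Type*} [AddCommMonoid M] {A : Set M}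

@[simp] lemma hfold_zero (A : Set M) : hfold 0 A = {0} := rfl

lemma hfold_succ (n : ℕ) (A : Set M) : hfold (n + 1) A = A + hfold n A := rfl

@[simp] lemma hfold_one (A : Set M) : hfold 1 A = A := by
  simp [hfold_succ]

lemma add_mem_hfold {s t : M} {i j : ℕ} (hs : s ∈ hfold i A) (ht : t ∈ hfold j A) :
    s + t ∈ hfold (i + j) A := by
  induction i generalizing s with
  | zero =>
    rw [hfold_zero, mem_singleton_iff] at hs
    simpa [hs] using ht
  | succ i ih =>
    obtain ⟨p, hp, s, hs, rfl⟩ := hs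
    rw [Nat.succ_add, hfold_succ, add_assoc]
    exact add_mem_add hp (ih hs)

lemma hfold_subset_closure (j : ℕ) : hfold j A ⊆ AddSubmonoid.closure A := by
  induction j with
  | zero => simp
  | succ j ih =>
    rintro _ ⟨p, hp, s, hs, rfl⟩
    exact add_mem (AddSubmonoid.subset_closure hp) (ih hs)

lemma mem_closure_singleton_union_iff {g x : M} :
    x ∈ AddSubmonoid.closure ({g} ∪ A) ↔ ∃ i j : ℕ, ∃ t ∈ hfold j A, i • g + t = x := by
  constructor
  · intro hx
    induction hx using AddSubmonoid.closure_induction with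
    | mem x hx =>
      rcases hx with rfl | hx
      · exact ⟨1, 0, 0, rfl, by simp⟩
      · exact ⟨0, 1, x, by simpa using hx, by simp⟩
    | zero => exact ⟨0, 0, 0, rfl, by simp⟩
    | add x y _ _ hx hy =>
      obtain ⟨i, j, s, hs, rfl⟩ := hx
      obtain ⟨i', j', t, ht, rfl⟩ := hy
      exact ⟨i + i', j + j', s + t, add_mem_hfold hs ht, by rw [add_nsmul]; abel⟩
  · rintro ⟨i, j, t, ht, rfl⟩
    have hg : g ∈ AddSubmonoid.closure ({g} ∪ A) := AddSubmonoid.subset_closure (by simp)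
    exact add_mem (nsmul_mem hg i)
      (AddSubmonoid.closure_mono subset_union_right (hfold_subset_closure j ht))

end Sumset

section OrderedSumset
variable {M : Type*} [AddCommMonoid M] [PartialOrder M] [IsOrderedAddMonoid M] {A : Set M}

lemma hfold_subset_Icc {a b : M} (hA : A ⊆ Icc a b) (j : ℕ) :
    hfold j A ⊆ Icc (j • a) (j • b) := by
  induction j with
  | zero => simp
  | succ j ih =>
    rintro _ ⟨p, hp, s, hs, rfl⟩
    rw [succ_nsmul', succ_nsmul']
    exact ⟨add_le_add (hA hp).1 (ih hs).1, add_le_add (hA hp).2 (ih hs).2⟩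

end OrderedSumset

lemma ncard_hfold_le {A : Set ℕ} {a b : ℕ} (hA : A ⊆ Icc a b) (j : ℕ) :
    (hfold j A).ncard ≤ j * (b - a) + 1 :=
  calc (hfold j A).ncard ≤ (Icc (j * a) (j * b)).ncard := by
        simpa using ncard_le_ncard (hfold_subset_Icc hA j) (finite_Icc _ _)
    _ ≤ j * (b - a) + 1 := by rw [ncard_Icc_nat, Nat.mul_sub]; omega

section NumericalSemigroup
variable {S : Set ℕ}

lemma NSconductor_eq {c : ℕ} (hc : ∀ k, c ≤ k → k ∈ S) (hc' : c - 1 ∉ S) :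
    NSconductor S = c := by
  refine le_antisymm (Nat.sInf_le hc) (le_csInf ⟨c, hc⟩ fun t ht => ?_)
  by_contra! hlt
  exact hc' (ht _ (by omega))

lemma mem_NSprims_of_lt_two_mul {n x : ℕ} (hS : ∀ y ∈ S, y ≠ 0 → n ≤ y) (hx : x ∈ S)
    (hx0 : x ≠ 0) (hxn : x < 2 * n) : x ∈ NSprims S := by
  refine ⟨hx, hx0, ?_⟩
  rintro ⟨y, hy, hy0, z, hz, hz0, rfl⟩
  have := hS y hy hy0
  have := hS z hz hz0
  omega

lemma NSprims_subset_Iic {n t : ℕ} (hn : n ∈ S) (hn0 : n ≠ 0) (ht : ∀ k, t ≤ k → k ∈ S) :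
    NSprims S ⊆ Iic (t + n) := by
  rintro x ⟨-, -, hx⟩
  by_contra! h
  rw [mem_Iic, not_le] at h
  exact hx ⟨n, hn, hn0, x - n, ht _ (by omega), by omega, by omega⟩

end NumericalSemigroup

lemma le_of_mem_closure_of_ne_zero {G : Set ℕ} {n x : ℕ} (hG : ∀ g ∈ G, n ≤ g)
    (hx : x ∈ AddSubmonoid.closure G) (hx0 : x ≠ 0) : n ≤ x := by
  induction hx using AddSubmonoid.closure_induction with
  | mem g hg => exact hG g hg
  | zero => exact absurd rfl hx0
  | add y z _ _ hy hz =>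
    rcases eq_or_ne y 0 with rfl | hy0
    · rw [zero_add] at hx0 ⊢
      exact hz hx0
    · exact (hy hy0).trans (Nat.le_add_right _ _)

def cell (m : ℕ) (A : Set ℕ) (c : ℕ × ℕ) : Set ℕ := (c.1 * m + ·) '' hfold c.2 A

def lowCells : Finset (ℕ × ℕ) :=
  {(0, 0), (1, 0), (2, 0), (3, 0), (0, 1), (1, 1), (2, 1), (0, 2)}

def windowCells : Finset (ℕ × ℕ) := {(4, 0), (3, 1), (1, 2), (0, 3)}

section Cells
variable {m a b : ℕ} {A : Set ℕ}

lemma mem_NSgenUpTo_iff {t x : ℕ} :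
    x ∈ NSgenUpTo ({m} ∪ A) t ↔ (∃ c, x ∈ cell m A c) ∨ t ≤ x := by
  rw [NSgenUpTo, mem_union, SetLike.mem_coe, mem_closure_singleton_union_iff]
  simp [cell]

lemma cell_subset_Icc (hA : A ⊆ Icc a b) (i j : ℕ) :
    cell m A (i, j) ⊆ Icc (i * m + j * a) (i * m + j * b) := by
  rintro _ ⟨t, ht, rfl⟩
  have := hfold_subset_Icc hA j ht
  simp only [smul_eq_mul, mem_Icc] at this ⊢
  omega

lemma cell_finite (hA : A ⊆ Icc a b) (c : ℕ × ℕ) : (cell m A c).Finite :=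
  (finite_Icc _ _).subset (cell_subset_Icc hA c.1 c.2)

lemma add_mem_cell {c c' : ℕ × ℕ} {x y : ℕ} (hx : x ∈ cell m A c) (hy : y ∈ cell m A c') :
    x + y ∈ cell m A (c + c') := by
  obtain ⟨s, hs, rfl⟩ := hx
  obtain ⟨t, ht, rfl⟩ := hy
  exact ⟨s + t, add_mem_hfold hs ht, by simp only [Prod.fst_add]; ring⟩

lemma ncard_cell (c : ℕ × ℕ) : (cell m A c).ncard = (hfold c.2 A).ncard :=
  ncard_image_of_injective _ (add_right_injective _)

lemma mem_lowCells_or_mem_windowCells (ha : 3 * m < 2 * a) (hA : A ⊆ Icc a b) {c : ℕ × ℕ}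
    {x : ℕ} (hx : x ∈ cell m A c) (hx5 : x < 5 * m) : c ∈ lowCells ∨ c ∈ windowCells := by
  obtain ⟨i, j⟩ := c
  obtain ⟨hlo, hhi⟩ := cell_subset_Icc hA i j hx
  have hi : i < 5 := by by_contra! h; nlinarith
  have hj : j < 4 := by by_contra! h; nlinarith
  interval_cases i <;> interval_cases j <;> first | decide | (exfalso; omega)

lemma add_one_lt_of_mem_lowCells (ha : 3 * m < 2 * a) (hab : a ≤ b) (hb : 3 * b < 5 * m)
    (hA : A ⊆ Icc a b) {c : ℕ × ℕ} (hc : c ∈ lowCells) {x : ℕ} (hx : x ∈ cell m A c) :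
    x + 1 < 4 * m := by
  obtain ⟨i, j⟩ := c
  obtain ⟨hlo, hhi⟩ := cell_subset_Icc hA i j hx
  simp only [lowCells, Finset.mem_insert, Finset.mem_singleton, Prod.mk.injEq] at hc
  rcases hc with ⟨rfl, rfl⟩ | ⟨rfl, rfl⟩ | ⟨rfl, rfl⟩ | ⟨rfl, rfl⟩ | ⟨rfl, rfl⟩ | ⟨rfl, rfl⟩ |
    ⟨rfl, rfl⟩ | ⟨rfl, rfl⟩ <;> omega

lemma le_of_mem_windowCells (ha : 3 * m < 2 * a) (hA : A ⊆ Icc a b) {c : ℕ × ℕ}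
    (hc : c ∈ windowCells) {x : ℕ} (hx : x ∈ cell m A c) : 4 * m ≤ x := by
  obtain ⟨i, j⟩ := c
  obtain ⟨hlo, hhi⟩ := cell_subset_Icc hA i j hx
  simp only [windowCells, Finset.mem_insert, Finset.mem_singleton, Prod.mk.injEq] at hc
  rcases hc with ⟨rfl, rfl⟩ | ⟨rfl, rfl⟩ | ⟨rfl, rfl⟩ | ⟨rfl, rfl⟩ <;> omega

lemma pairwiseDisjoint_lowCells (ha : 3 * m < 2 * a) (hab : a ≤ b) (hb : 3 * b < 5 * m)
    (hA : A ⊆ Icc a b) : (lowCells : Set (ℕ × ℕ)).PairwiseDisjoint (cell m A) := by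
  rintro ⟨i, j⟩ hc ⟨i', j'⟩ hc' hne
  refine disjoint_left.2 fun x hx hx' => hne ?_
  obtain ⟨hlo, hhi⟩ := cell_subset_Icc hA i j hx
  obtain ⟨hlo', hhi'⟩ := cell_subset_Icc hA i' j' hx'
  simp only [lowCells, Finset.coe_insert, Finset.coe_singleton, mem_insert_iff,
    mem_singleton_iff, Prod.mk.injEq] at hc hc'
  rcases hc with ⟨rfl, rfl⟩ | ⟨rfl, rfl⟩ | ⟨rfl, rfl⟩ | ⟨rfl, rfl⟩ | ⟨rfl, rfl⟩ | ⟨rfl, rfl⟩ |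
    ⟨rfl, rfl⟩ | ⟨rfl, rfl⟩ <;>
  rcases hc' with ⟨rfl, rfl⟩ | ⟨rfl, rfl⟩ | ⟨rfl, rfl⟩ | ⟨rfl, rfl⟩ | ⟨rfl, rfl⟩ | ⟨rfl, rfl⟩ |
    ⟨rfl, rfl⟩ | ⟨rfl, rfl⟩ <;>
  first | rfl | (exfalso; omega)

end Cells

section Semigroup
variable {m a b : ℕ} {A : Set ℕ}

lemma le_of_mem_NSgenUpTo (ha : 3 * m < 2 * a) (hA : A ⊆ Icc a b) {x : ℕ}
    (hx : x ∈ NSgenUpTo ({m} ∪ A) (4 * m)) (hx0 : x ≠ 0) : m ≤ x := by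
  rcases hx with hx | hx
  · refine le_of_mem_closure_of_ne_zero (fun g hg => ?_) hx hx0
    rcases hg with rfl | hg
    · exact le_rfl
    · have := (hA hg).1
      omega
  · exact le_trans (by omega) hx

lemma NSconductor_NSgenUpTo (ha : 3 * m < 2 * a) (hab : a ≤ b) (hb : 3 * b < 5 * m)
    (hA : A ⊆ Icc a b) : NSconductor (NSgenUpTo ({m} ∪ A) (4 * m)) = 4 * m := by
  refine NSconductor_eq (fun k hk => mem_NSgenUpTo_iff.2 (Or.inr hk)) ?_
  rw [mem_NSgenUpTo_iff]
  rintro (⟨c, hc⟩ | h)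
  · rcases mem_lowCells_or_mem_windowCells ha hA hc (by omega) with hl | hw
    · have := add_one_lt_of_mem_lowCells ha hab hb hA hl hc
      omega
    · have := le_of_mem_windowCells ha hA hw hc
      omega
  · omega

lemma NSLset_NSgenUpTo (ha : 3 * m < 2 * a) (hab : a ≤ b) (hb : 3 * b < 5 * m)
    (hA : A ⊆ Icc a b) :
    NSLset (NSgenUpTo ({m} ∪ A) (4 * m)) = ⋃ c ∈ lowCells, cell m A c := by
  ext x
  rw [NSLset, NSconductor_NSgenUpTo ha hab hb hA, mem_inter_iff, mem_Iio, mem_iUnion₂,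
    mem_NSgenUpTo_iff]
  constructor
  · rintro ⟨⟨c, hc⟩ | h, hx⟩
    · refine ⟨c, (mem_lowCells_or_mem_windowCells ha hA hc (by omega)).resolve_right
        fun hw => ?_, hc⟩
      have := le_of_mem_windowCells ha hA hw hc
      omega
    · omega
  · rintro ⟨c, hl, hc⟩
    have := add_one_lt_of_mem_lowCells ha hab hb hA hl hc
    exact ⟨Or.inl ⟨c, hc⟩, by omega⟩

lemma ncard_NSLset_NSgenUpTo (ha : 3 * m < 2 * a) (hab : a ≤ b) (hb : 3 * b < 5 * m)
    (hA : A ⊆ Icc a b) :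
    (NSLset (NSgenUpTo ({m} ∪ A) (4 * m))).ncard = 4 + 3 * A.ncard + (hfold 2 A).ncard := by
  have h := (Finset.finite_toSet lowCells).ncard_biUnion (fun c _ => cell_finite hA c)
    (pairwiseDisjoint_lowCells ha hab hb hA)
  rw [finsum_mem_coe_finset] at h
  simp only [Finset.mem_coe] at h
  rw [NSLset_NSgenUpTo ha hab hb hA, h]
  simp [lowCells, ncard_cell]
  ring

end Semigroup

section Primitives
variable {m a b : ℕ} {A : Set ℕ}

lemma mem_NSprims_of_notMem_windowCells (ha : 3 * m < 2 * a) (hab : a ≤ b)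
    (hb : 3 * b < 5 * m) (hA : A ⊆ Icc a b) {x : ℕ} (hx : x ∈ Ico (4 * m) (5 * m))
    (hxD : x ∉ ⋃ c ∈ windowCells, cell m A c) : x ∈ NSprims (NSgenUpTo ({m} ∪ A) (4 * m)) := by
  rw [mem_Ico] at hx
  refine ⟨mem_NSgenUpTo_iff.2 (Or.inr hx.1), by omega, ?_⟩
  rintro ⟨y, hy, hy0, z, hz, hz0, rfl⟩
  have hym := le_of_mem_NSgenUpTo ha hA hy hy0
  have hzm := le_of_mem_NSgenUpTo ha hA hz hz0
  obtain ⟨c, hyc⟩ := (mem_NSgenUpTo_iff.1 hy).resolve_right (by omega)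
  obtain ⟨c', hzc⟩ := (mem_NSgenUpTo_iff.1 hz).resolve_right (by omega)
  have hyz := add_mem_cell hyc hzc
  rcases mem_lowCells_or_mem_windowCells ha hA hyz hx.2 with hl | hw
  · have := add_one_lt_of_mem_lowCells ha hab hb hA hl hyz
    omega
  · exact hxD (mem_iUnion₂.2 ⟨_, hw, hyz⟩)

lemma ncard_biUnion_windowCells_le :
    (⋃ c ∈ windowCells, cell m A c).ncard ≤
      1 + (hfold 2 A).ncard + (cell m A (3, 1) ∪ cell m A (0, 3)).ncard := by
  have h : ⋃ c ∈ windowCells, cell m A c =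
      (cell m A (4, 0) ∪ cell m A (1, 2)) ∪ (cell m A (3, 1) ∪ cell m A (0, 3)) := by
    simp only [windowCells, Finset.set_biUnion_insert, Finset.set_biUnion_singleton]
    ext
    simp only [mem_union]
    tauto
  rw [h]
  refine (ncard_union_le _ _).trans (Nat.add_le_add_right ((ncard_union_le _ _).trans ?_) _)
  simp [ncard_cell]

lemma insert_subset_NSprims_NSgenUpTo (ha : 3 * m < 2 * a) (hb : 3 * b < 5 * m)
    (hA : A ⊆ Icc a b) : insert m A ⊆ NSprims (NSgenUpTo ({m} ∪ A) (4 * m)) := by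
  intro x hx
  have hxm : m ≤ x ∧ x < 2 * m := by
    rcases hx with rfl | hx
    · omega
    · obtain ⟨hax, hxb⟩ := hA hx
      omega
  refine mem_NSprims_of_lt_two_mul (fun y hy hy0 => le_of_mem_NSgenUpTo ha hA hy hy0)
    (mem_NSgenUpTo_iff.2 (Or.inl ?_)) (by omega) hxm.2
  rcases hx with rfl | hx
  · exact ⟨(1, 0), 0, by simp, by simp⟩
  · exact ⟨(0, 1), x, by simpa using hx, by simp⟩

lemma add_ncard_le_ncard_NSprims (ha : 3 * m < 2 * a) (hab : a ≤ b) (hb : 3 * b < 5 * m)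
    (hA : A ⊆ Icc a b) :
    m + A.ncard ≤ (NSprims (NSgenUpTo ({m} ∪ A) (4 * m))).ncard + (hfold 2 A).ncard +
      (cell m A (3, 1) ∪ cell m A (0, 3)).ncard := by
  set S := NSgenUpTo ({m} ∪ A) (4 * m)
  set D := ⋃ c ∈ windowCells, cell m A c
  have hAfin : A.Finite := (finite_Icc a b).subset hA
  have hDfin : D.Finite := (Finset.finite_toSet windowCells).biUnion fun c _ => cell_finite hA c
  have hmA : m ∉ A := fun h => by have := (hA h).1; omega
  have hlow : insert m A ⊆ NSprims S := insert_subset_NSprims_NSgenUpTo ha hb hA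
  have hwin : Ico (4 * m) (5 * m) \ D ⊆ NSprims S := fun x hx =>
    mem_NSprims_of_notMem_windowCells ha hab hb hA hx.1 hx.2
  have hdisj : Disjoint (insert m A) (Ico (4 * m) (5 * m) \ D) := by
    refine disjoint_left.2 fun x hx hx' => ?_
    have := hx'.1.1
    rcases hx with rfl | hx
    · omega
    · have := (hA hx).2
      omega
  have hPfin : (NSprims S).Finite := (finite_Iic _).subset
    (NSprims_subset_Iic (hlow (mem_insert m A)).1 (by omega) fun k hk =>
      mem_NSgenUpTo_iff.2 (Or.inr hk))
  have hcount := ncard_le_ncard (union_subset hlow hwin) hPfin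
  rw [ncard_union_eq hdisj (hAfin.insert m) (finite_Ico _ _).sdiff,
    ncard_insert_of_notMem hmA hAfin] at hcount
  have hwin_card := ncard_le_ncard_sdiff_add_ncard (Ico (4 * m) (5 * m)) D hDfin
  rw [ncard_Ico_nat, show 5 * m - 4 * m = m by omega] at hwin_card
  have hD : D.ncard ≤ 1 + (hfold 2 A).ncard + (cell m A (3, 1) ∪ cell m A (0, 3)).ncard :=
    ncard_biUnion_windowCells_le
  omega

lemma ncard_cell_union_le (ha : 3 * m < 2 * a) (hab : a ≤ b)
    (hA : A ⊆ Icc a b) : (cell m A (3, 1) ∪ cell m A (0, 3)).ncard + 3 * m + a ≤ 3 * b + 1 := by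
  have hsub : cell m A (3, 1) ∪ cell m A (0, 3) ⊆ Icc (3 * m + a) (3 * b) := by
    refine union_subset (fun x hx => ?_) (fun x hx => ?_)
    · have := cell_subset_Icc hA 3 1 hx
      simp only [mem_Icc] at this ⊢
      omega
    · have := cell_subset_Icc hA 0 3 hx
      simp only [mem_Icc] at this ⊢
      omega
  have := ncard_le_ncard hsub (finite_Icc _ _)
  rw [ncard_Icc_nat] at this
  omega

end Primitives

lemma nine_add_four_mul_le_mul {m a b k K U P : ℕ} (ha : 3 * m < 2 * a) (hb : 3 * b < 5 * m)
    (hk : 2 ≤ k) (hK : K + 2 * a ≤ 2 * b + 1)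
    (hU : U + 3 * m + a ≤ 3 * b + 1) (hP : m + k ≤ P + K + U) :
    9 + 4 * m ≤ P * (4 + 3 * k + K) := by
  have h2P : m + 1 + 2 * k ≤ 2 * P + 2 * K := by omega
  have h3K : 3 * K + 2 ≤ m := by omega
  zify at h2P h3K hk ⊢
  have hK0 : (0 : ℤ) ≤ K := Int.natCast_nonneg K
  -- With `k = s + 2` and `m = 3K + 2 + r`, the difference is `K² - 7K + 36` plus a polynomial
  -- in `K, r, s` with nonnegative coefficients.
  have key : 2 * (9 + 4 * (m : ℤ)) ≤ (m + 1 + 2 * k - 2 * K) * (4 + 3 * k + K) := by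
    nlinarith [mul_nonneg hK0 (sub_nonneg.2 h3K), mul_nonneg hK0 (sub_nonneg.2 hk),
      mul_nonneg (sub_nonneg.2 hk) (sub_nonneg.2 h3K), sq_nonneg ((k : ℤ) - 2),
      sq_nonneg (2 * (K : ℤ) - 7)]
  nlinarith

theorem stmt19_general (m a b : ℕ)
    (ha : 3 * m + 1 ≤ 2 * a) (hab : a < b) (hb : 3 * b ≤ 5 * m - 1)
    (A : Set ℕ)
    (hmin : IsLeast A a) (hmax : IsGreatest A b) :
    9 ≤ NSWnum (NSgenUpTo ({m} ∪ A) (4 * m)) := by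
  replace ha : 3 * m < 2 * a := by omega
  replace hb : 3 * b < 5 * m := by omega
  have hA : A ⊆ Icc a b := fun p hp => ⟨hmin.2 hp, hmax.2 hp⟩
  have hk : 2 ≤ A.ncard := by
    rw [← ncard_pair hab.ne]
    exact ncard_le_ncard (pair_subset hmin.1 hmax.1) ((finite_Icc a b).subset hA)
  have hK := ncard_hfold_le hA 2
  have hW := nine_add_four_mul_le_mul ha hb hk (by omega) (ncard_cell_union_le ha hab.le hA)
    (add_ncard_le_ncard_NSprims ha hab.le hb hA)
  rw [NSWnum, NSconductor_NSgenUpTo ha hab.le hb hA, ncard_NSLset_NSgenUpTo ha hab.le hb hA]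
  push_cast
  linarith [(Nat.cast_le (α := ℤ)).2 hW]

theorem stmt19 (m a b n : ℕ) (hn : 3 ≤ n) (hm : 0 < m)
    (ha : 3 * m + 1 ≤ 2 * a) (hab : a < b) (hb : 3 * b ≤ 5 * m - 1)
    (A : Set ℕ) (hfin : A.Finite) (hcard : A.ncard = n - 1)
    (hmin : IsLeast A a) (hmax : IsGreatest A b)
    (himg : ((fun x : ℕ => (x : ZMod m)) '' A).ncard = n - 1)
    (hB3 : IsBh 3 ((fun x : ℕ => (x : ZMod m)) '' A)) :
    9 ≤ NSWnum (NSgenUpTo ({m} ∪ A) (4 * m)) :=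
  stmt19_general m a b ha hab hb A hmin hmax
end
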